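/- arXiv:math/0409201 — 5 statements merged into one kernel-verified Lean document; each statement's English description precedes it below -/
import Mathlib

section
/- Let X_1, ..., X_m be i.i.d. uniform random variables on (0,1], with X_0 = 0, and let Z_m = X_m - max{X_j : 0 ≤ j < m, X_j < X_m}. Then for 0 ≤ t ≤ 1, P[Z_m > t] = (1-t)^m. -/
open MeasureTheory ProbabilityTheory Real Set

/-! The gap to the left of `X m` exceeds `t` iff `t < X m` and none of `X 1, …, X (m - 1)` falls
in `[X m - t, X m)`. Given `X m = a ∈ (t, 1]`, each of these `m - 1` points independently avoids
that interval of length `t` with probability `1 - t`, so the probability is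
`∫ a in t..1, (1 - t) ^ (m - 1) = (1 - t) ^ m`. -/

theorem lt_sub_sSup_iff_forall_notMem_Ico (x : ℕ → ℝ) {m : ℕ} (h : ∃ j < m, x j < x m) (t : ℝ) :
    t < x m - sSup {y | ∃ j < m, x j = y ∧ y < x m} ↔ ∀ j < m, x j ∉ Ico (x m - t) (x m) := by
  have hfin : {y | ∃ j < m, x j = y ∧ y < x m}.Finite :=
    ((finite_Iio m).image x).subset fun y ⟨j, hj, hy, _⟩ => ⟨j, hj, hy⟩
  obtain ⟨j, hj, hlt⟩ := h
  rw [lt_sub_comm, hfin.csSup_lt_iff ⟨x j, j, hj, rfl, hlt⟩]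
  simp only [mem_ofPred_eq, mem_Ico, not_and, forall_exists_index, and_imp]
  constructor
  · intro H k hk hle hlt
    exact absurd (H _ k hk rfl hlt) (not_lt.2 hle)
  · rintro H _ k hk rfl hlt
    by_contra hle
    exact H k hk (not_lt.1 hle) hlt

section LastCoordinate

variable {α : Type*} [MeasurableSpace α] {n : ℕ} {A : Set α} {R : Set (α × α)}

theorem measurableSet_setOf_last_mem_forall_castSucc (hA : MeasurableSet A)
    (hR : MeasurableSet R) :
    MeasurableSet {v : Fin (n + 1) → α |
      v (Fin.last n) ∈ A ∧ ∀ j : Fin n, (v (Fin.last n), v j.castSucc) ∈ R} := by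
  simp only [ofPred_and, ofPred_forall]
  exact (measurable_pi_apply _ hA).inter <| .iInter fun j =>
    ((measurable_pi_apply _).prodMk (measurable_pi_apply _)) hR

theorem measure_pi_setOf_last_mem_forall_castSucc (ν : Measure α) [SigmaFinite ν]
    (hA : MeasurableSet A) (hR : MeasurableSet R) :
    Measure.pi (fun _ : Fin (n + 1) => ν)
        {v | v (Fin.last n) ∈ A ∧ ∀ j : Fin n, (v (Fin.last n), v j.castSucc) ∈ R} =
      ∫⁻ a in A, ν (Prod.mk a ⁻¹' R) ^ n ∂ν := by
  set e := MeasurableEquiv.piFinSuccAbove (fun _ : Fin (n + 1) => α) (Fin.last n)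
  set T : Set (α × (Fin n → α)) := {p | p.1 ∈ A ∧ ∀ j, (p.1, p.2 j) ∈ R}
  have heT : e ⁻¹' T =
      {v | v (Fin.last n) ∈ A ∧ ∀ j : Fin n, (v (Fin.last n), v j.castSucc) ∈ R} := by
    ext; simp [e, T, Fin.init]
  have hT : MeasurableSet T := by
    rw [← e.measurableSet_preimage, heT]
    exact measurableSet_setOf_last_mem_forall_castSucc hA hR
  have hsection (a : α) : Measure.pi (fun _ : Fin n => ν) (Prod.mk a ⁻¹' T) =
      A.indicator (fun a => ν (Prod.mk a ⁻¹' R) ^ n) a := by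
    by_cases ha : a ∈ A
    · have : Prod.mk a ⁻¹' T = univ.pi fun _ => Prod.mk a ⁻¹' R := by ext; simp [T, ha]
      simp [this, ha, Measure.pi_pi]
    · have : Prod.mk a ⁻¹' T = ∅ := by ext; simp [T, ha]
      simp [this, ha]
  rw [← heT, (measurePreserving_piFinSuccAbove (fun _ => ν) (Fin.last n)).measure_preimage
    hT.nullMeasurableSet, Measure.prod_apply hT, lintegral_congr hsection, lintegral_indicator hA]

end LastCoordinate

theorem volume_restrict_Ioc_zero_one_compl_Ico {a t : ℝ} (ht : 0 ≤ t) (hta : t ≤ a)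
    (ha : a ≤ 1) : volume.restrict (Ioc 0 1) (Ico (a - t) a)ᶜ = ENNReal.ofReal (1 - t) := by
  have : IsProbabilityMeasure (volume.restrict (Ioc (0 : ℝ) 1)) := ⟨by simp⟩
  rw [prob_compl_eq_one_sub measurableSet_Ico, Measure.restrict_congr_set Ioc_ae_eq_Icc,
    Measure.restrict_apply measurableSet_Ico,
    inter_eq_left.2 (Ico_subset_Icc_self.trans (Icc_subset_Icc (by linarith) ha)),
    volume_Ico, sub_sub_cancel, ENNReal.ofReal_sub _ ht, ENNReal.ofReal_one]

theorem setLIntegral_Ioi_volume_restrict_Ioc_compl_Ico_pow {t : ℝ} (ht0 : 0 ≤ t) (ht1 : t ≤ 1)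
    (n : ℕ) :
    ∫⁻ a in Ioi t, volume.restrict (Ioc 0 1) (Ico (a - t) a)ᶜ ^ n ∂volume.restrict (Ioc 0 1) =
      ENNReal.ofReal ((1 - t) ^ (n + 1)) := by
  rw [Measure.restrict_restrict measurableSet_Ioi, inter_comm, Ioc_inter_Ioi, max_eq_right ht0]
  calc _ = ∫⁻ _ in Ioc t 1, ENNReal.ofReal (1 - t) ^ n := by
        refine setLIntegral_congr_fun measurableSet_Ioc fun a ha => ?_
        rw [volume_restrict_Ioc_zero_one_compl_Ico ht0 ha.1.le ha.2]
    _ = _ := by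
      rw [setLIntegral_const, Real.volume_Ioc, ← ENNReal.ofReal_pow (by linarith),
        ← ENNReal.ofReal_mul (by positivity), pow_succ]

theorem stmt0 {Ω : Type*} [MeasureSpace Ω] [IsProbabilityMeasure (ℙ : Measure Ω)]
    (m : ℕ) (hm : 1 ≤ m)
    (X : ℕ → Ω → ℝ)
    (hX0 : ∀ ω, X 0 ω = 0)
    (hXmeas : ∀ i, Measurable (X i))
    (hXindep : iIndepFun (fun i : ℕ => X (i + 1)) ℙ)
    (hXunif : ∀ i : ℕ, Measure.map (X (i + 1)) ℙ
      = (volume : Measure ℝ).restrict (Set.Ioc 0 1))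
    (Z : ℕ → Ω → ℝ)
    (hZ : ∀ k ω, Z k ω = X k ω - sSup {y : ℝ | ∃ j < k, X j ω = y ∧ y < X k ω})
    (t : ℝ) (ht0 : 0 ≤ t) (ht1 : t ≤ 1) :
    ℙ {ω | t < Z m ω} = ENNReal.ofReal ((1 - t) ^ m) := by
  obtain ⟨n, rfl⟩ := Nat.exists_eq_add_of_le' hm
  let V : Ω → Fin (n + 1) → ℝ := fun ω i => X (i + 1) ω
  have hV : Measurable V := measurable_pi_lambda _ fun i => hXmeas _
  have hVlaw : Measure.map V ℙ = Measure.pi fun _ => volume.restrict (Ioc 0 1) := by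
    rw [(hXindep.precomp Fin.val_injective).map_fun_eq_pi_map fun i => (hXmeas _).aemeasurable]
    simp only [hXunif]
  have hXIoc : ∀ᵐ ω ∂ℙ, ∀ i, X (i + 1) ω ∈ Ioc 0 1 := ae_all_iff.2 fun i =>
    ae_of_ae_map (hXmeas _).aemeasurable (hXunif i ▸ ae_restrict_mem measurableSet_Ioc)
  set R : Set (ℝ × ℝ) := {p | p.2 ∉ Ico (p.1 - t) p.1}
  have hR : MeasurableSet R :=
    ((measurableSet_le (measurable_fst.sub_const t) measurable_snd).inter
      (measurableSet_lt measurable_snd measurable_fst)).compl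
  have hevent : {ω | t < Z (n + 1) ω} =ᵐ[ℙ]
      V ⁻¹' {v | v (Fin.last n) ∈ Ioi t ∧ ∀ j : Fin n, (v (Fin.last n), v j.castSucc) ∈ R} := by
    refine Filter.eventuallyEq_set.2 ?_
    filter_upwards [hXIoc] with ω hω
    have hpos : X 0 ω < X (n + 1) ω := hX0 ω ▸ (hω n).1
    change t < Z (n + 1) ω ↔ t < X (n + 1) ω ∧
      ∀ j : Fin n, X (j + 1) ω ∉ Ico (X (n + 1) ω - t) (X (n + 1) ω)
    rw [hZ, lt_sub_sSup_iff_forall_notMem_Ico (fun k => X k ω) ⟨0, n.succ_pos, hpos⟩,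
      Nat.forall_lt_succ_left, Fin.forall_iff, hX0]
    simp only [mem_Ico, sub_nonpos, (hω n).1, and_true, not_le]
  rw [measure_congr hevent, ← Measure.map_apply hV
    (measurableSet_setOf_last_mem_forall_castSucc measurableSet_Ioi hR), hVlaw,
    measure_pi_setOf_last_mem_forall_castSucc _ measurableSet_Ioi hR]
  exact setLIntegral_Ioi_volume_restrict_Ioc_compl_Ico_pow ht0 ht1 n
end

section
/- The expected total length (α=1) of the directed linear tree on m uniform points with root 0 satisfies E[D^1(U_m^0)] = Σ_{i=1}^m 1/(i+1), and hence E[D^1(U_m^0)] - log m → γ - 1 as m → ∞, where γ is Euler's constant. -/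
/-!
Write the `m + 1`-st edge as `Z = Y - L`, where `Y = X (m + 1)` and `L` is its left neighbour.
By Fubini, `E Z = ∫₀¹ P(L < t ≤ Y) dt`. Given `Y = x ≥ t`, the event `L < t` says that none of
the `m` earlier uniform points falls in `[t, x)`, which has probability `(1 - x + t) ^ m`; hence
`P(L < t ≤ Y) = ∫ₜ¹ (1 - x + t) ^ m dx = (1 - t ^ (m + 1)) / (m + 1)`, whose integral over `t` is
`1 / (m + 2)`. The asymptotics then follow from `H (n + 1) - log (n + 1) → γ` and
`log (n + 1) - log n → 0`.
-/

open MeasureTheory ProbabilityTheory Real Set Filter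

/-- The largest of `x 0, …, x m` below `x (m + 1)`, points above it being replaced by `x 0`;
when `x 0 < x (m + 1)` this is the left neighbour of `x (m + 1)`. -/
noncomputable def nearestLeft (x : ℕ → ℝ) (m : ℕ) : ℝ :=
  (Finset.range (m + 1)).sup' Finset.nonempty_range_add_one
    fun j => if x j < x (m + 1) then x j else x 0

section nearestLeft

variable (x : ℕ → ℝ) (m : ℕ)

theorem sSup_setOf_lt_eq_nearestLeft (h : x 0 < x (m + 1)) :
    sSup {y | ∃ j < m + 1, x j = y ∧ y < x (m + 1)} = nearestLeft x m := by
  rw [nearestLeft, Finset.sup'_eq_csSup_image]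
  congr 1
  ext y
  simp only [mem_ofPred_eq, Finset.coe_range, mem_image, mem_Iio]
  constructor
  · rintro ⟨j, hj, rfl, hlt⟩
    exact ⟨j, hj, if_pos hlt⟩
  · rintro ⟨j, hj, rfl⟩
    split_ifs with hlt
    · exact ⟨j, hj, rfl, hlt⟩
    · exact ⟨0, m.succ_pos, rfl, h⟩

theorem nearestLeft_lt_iff {t : ℝ} (h : x 0 < t) :
    nearestLeft x m < t ↔ ∀ j < m, x (j + 1) < t ∨ x (m + 1) ≤ x (j + 1) := by
  simp only [nearestLeft, Finset.sup'_lt_iff, Finset.mem_range, Nat.forall_lt_succ_left,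
    ite_self, h, true_and]
  refine forall₂_congr fun j _ => ?_
  split_ifs with hlt
  · exact ⟨Or.inl, fun h' => h'.resolve_right hlt.not_ge⟩
  · exact ⟨fun _ => Or.inr (not_lt.1 hlt), fun _ => h⟩

theorem le_nearestLeft : x 0 ≤ nearestLeft x m := by
  have := Finset.le_sup' (fun j => if x j < x (m + 1) then x j else x 0)
    (Finset.mem_range.2 m.succ_pos)
  rwa [ite_self] at this

theorem nearestLeft_le (h : x 0 ≤ x (m + 1)) : nearestLeft x m ≤ x (m + 1) :=
  Finset.sup'_le _ _ fun j _ => by split_ifs with hlt <;> [exact hlt.le; exact h]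

end nearestLeft

theorem measurable_nearestLeft {Ω : Type*} [MeasurableSpace Ω] {X : ℕ → Ω → ℝ}
    (hXmeas : ∀ i, Measurable (X i)) (m : ℕ) : Measurable fun ω => nearestLeft (X · ω) m :=
  Finset.measurable_range_sup'' fun j _ =>
    Measurable.ite (measurableSet_lt (hXmeas j) (hXmeas _)) (hXmeas j) (hXmeas 0)

theorem lintegral_ofReal_sub_eq_setLIntegral_measure {Ω : Type*} [MeasurableSpace Ω]
    (μ : Measure Ω) [SFinite μ] {f g : Ω → ℝ} (hf : Measurable f) (hg : Measurable g)
    {s : Set ℝ} (hs : ∀ᵐ ω ∂μ, Ioc (f ω) (g ω) ⊆ s) :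
    ∫⁻ ω, ENNReal.ofReal (g ω - f ω) ∂μ = ∫⁻ t in s, μ {ω | f ω < t ∧ t ≤ g ω} := by
  have hA : MeasurableSet {p : Ω × ℝ | f p.1 < p.2 ∧ p.2 ≤ g p.1} :=
    (measurableSet_lt (hf.comp measurable_fst) measurable_snd).inter
      (measurableSet_le measurable_snd (hg.comp measurable_fst))
  calc ∫⁻ ω, ENNReal.ofReal (g ω - f ω) ∂μ
      = ∫⁻ ω, volume.restrict s (Ioc (f ω) (g ω)) ∂μ := by
        refine lintegral_congr_ae ?_
        filter_upwards [hs] with ω hω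
        rw [Measure.restrict_apply measurableSet_Ioc, inter_eq_left.2 hω, Real.volume_Ioc]
    _ = μ.prod (volume.restrict s) {p | f p.1 < p.2 ∧ p.2 ≤ g p.1} :=
        (Measure.prod_apply hA).symm
    _ = _ := Measure.prod_apply_symm hA

theorem integrable_and_integral_eq_of_lintegral_ofReal_eq {α : Type*} [MeasurableSpace α]
    {μ : Measure α} {f : α → ℝ} (hf0 : 0 ≤ᵐ[μ] f) (hf : AEStronglyMeasurable f μ) {c : ℝ}
    (hc : 0 ≤ c) (h : ∫⁻ a, ENNReal.ofReal (f a) ∂μ = ENNReal.ofReal c) :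
    Integrable f μ ∧ ∫ a, f a ∂μ = c :=
  ⟨⟨hf, (hasFiniteIntegral_iff_ofReal hf0).2 (h ▸ ENNReal.ofReal_lt_top)⟩,
    by rw [integral_eq_lintegral_of_nonneg_ae hf0 hf, h, ENNReal.toReal_ofReal hc]⟩

namespace ProbabilityTheory

theorem IndepFun.measure_preimage_prodMk {Ω α β : Type*} [MeasurableSpace Ω]
    [MeasurableSpace α] [MeasurableSpace β] {μ : Measure Ω} [IsFiniteMeasure μ] {Y : Ω → α}
    {W : Ω → β} (h : IndepFun Y W μ) (hY : Measurable Y) (hW : Measurable W)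
    {C : Set (α × β)} (hC : MeasurableSet C) :
    μ ((fun ω => (Y ω, W ω)) ⁻¹' C) = ∫⁻ x, μ (W ⁻¹' (Prod.mk x ⁻¹' C)) ∂μ.map Y := by
  rw [← Measure.map_apply (hY.prodMk hW) hC,
    (indepFun_iff_map_prod_eq_prod_map_map hY.aemeasurable hW.aemeasurable).1 h,
    Measure.prod_apply hC]
  exact lintegral_congr fun x => Measure.map_apply hW (measurable_prodMk_left hC)

theorem iIndepFun.indepFun_pi_of_notMem {Ω ι β : Type*} [MeasurableSpace Ω]
    [MeasurableSpace β] {μ : Measure Ω} [IsProbabilityMeasure μ] {f : ι → Ω → β}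
    (h : iIndepFun f μ) (hf : ∀ i, Measurable (f i)) {i : ι} {T : Finset ι} (hi : i ∉ T) :
    IndepFun (f i) (fun ω (j : T) => f j ω) μ := by
  have := (h.indepFun_finset {i} T (Finset.disjoint_singleton_left.2 hi) hf).comp
    (measurable_pi_apply ⟨i, Finset.mem_singleton_self i⟩) measurable_id
  exact this

theorem iIndepFun.measure_biInter_preimage_eq_pow {Ω ι β : Type*} [MeasurableSpace Ω]
    [MeasurableSpace β] {μ : Measure Ω} {f : ι → Ω → β} (h : iIndepFun f μ)
    (hf : ∀ i, Measurable (f i)) {ν : Measure β} (hν : ∀ i, μ.map (f i) = ν) (S : Finset ι)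
    {B : Set β} (hB : MeasurableSet B) :
    μ (⋂ i ∈ S, f i ⁻¹' B) = ν B ^ S.card := by
  rw [h.measure_inter_preimage_eq_mul S (sets := fun _ => B) (fun _ _ => hB)]
  simp_rw [← Measure.map_apply (hf _) hB, hν, Finset.prod_const]

end ProbabilityTheory

theorem volume_restrict_Ioc_zero_one_Iio_union_Ici {t x : ℝ} (ht : 0 < t) (htx : t ≤ x)
    (hx : x ≤ 1) :
    volume.restrict (Ioc (0 : ℝ) 1) (Iio t ∪ Ici x) = ENNReal.ofReal (1 - x + t) := by
  have hdiff : (Iio t ∪ Ici x) ∩ Ioc 0 1 = Ioc 0 1 \ Ico t x := by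
    ext y
    simp only [mem_inter_iff, mem_union, mem_Iio, mem_Ici, mem_Ioc, Set.mem_sdiff, mem_Ico]
    grind
  have hsub : Ico t x ⊆ Ioc 0 1 := fun y hy => ⟨ht.trans_le hy.1, hy.2.le.trans hx⟩
  rw [Measure.restrict_apply (measurableSet_Iio.union measurableSet_Ici), hdiff,
    measure_sdiff hsub measurableSet_Ico.nullMeasurableSet measure_Ico_lt_top.ne,
    Real.volume_Ioc, Real.volume_Ico, ← ENNReal.ofReal_sub _ (sub_nonneg.2 htx)]
  ring_nf

theorem integral_one_sub_add_pow (t : ℝ) (m : ℕ) :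
    ∫ x in t..1, (1 - x + t) ^ m = (1 - t ^ (m + 1)) / (m + 1) := by
  have h := intervalIntegral.integral_comp_sub_left (fun x : ℝ => x ^ m) (1 + t) (a := t) (b := 1)
  simp only [add_sub_cancel_left, add_sub_cancel_right, integral_pow, one_pow] at h
  rw [← h]
  congr 1 with x
  ring

theorem integral_one_sub_pow_div (m : ℕ) :
    ∫ t in (0 : ℝ)..1, (1 - t ^ (m + 1)) / (m + 1) = 1 / (m + 2) := by
  rw [intervalIntegral.integral_div, intervalIntegral.integral_sub intervalIntegrable_const
    (intervalIntegral.intervalIntegrable_pow _), integral_pow]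
  field_simp
  norm_num
  ring

section UniformPoints

variable {Ω : Type*} [MeasureSpace Ω] {X : ℕ → Ω → ℝ}

theorem ae_mem_Ioc_of_map_eq (hXmeas : ∀ i, Measurable (X i))
    (hXunif : ∀ i : ℕ, Measure.map (X (i + 1)) ℙ = (volume : Measure ℝ).restrict (Ioc 0 1))
    (i : ℕ) : ∀ᵐ ω, X (i + 1) ω ∈ Ioc (0 : ℝ) 1 :=
  ae_of_ae_map (hXmeas _).aemeasurable (hXunif i ▸ ae_restrict_mem measurableSet_Ioc)

theorem measure_forall_mem_Iio_union_Ici [IsProbabilityMeasure (ℙ : Measure Ω)]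
    (hXmeas : ∀ i, Measurable (X i)) (hXindep : iIndepFun (fun i : ℕ => X (i + 1)) ℙ)
    (hXunif : ∀ i : ℕ, Measure.map (X (i + 1)) ℙ = (volume : Measure ℝ).restrict (Ioc 0 1))
    (m : ℕ) {t x : ℝ} (ht : 0 < t) (htx : t ≤ x) (hx : x ≤ 1) :
    ℙ {ω | ∀ j : Finset.range m, X (j + 1) ω ∈ Iio t ∪ Ici x}
      = ENNReal.ofReal ((1 - x + t) ^ m) := by
  have hset : {ω | ∀ j : Finset.range m, X (j + 1) ω ∈ Iio t ∪ Ici x}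
      = ⋂ j ∈ Finset.range m, X (j + 1) ⁻¹' (Iio t ∪ Ici x) := by
    ext ω
    simp
  rw [hset, hXindep.measure_biInter_preimage_eq_pow (fun i => hXmeas _) hXunif _
    (measurableSet_Iio.union measurableSet_Ici),
    volume_restrict_Ioc_zero_one_Iio_union_Ici ht htx hx, Finset.card_range,
    ENNReal.ofReal_pow (by linarith)]

theorem measure_nearestLeft_lt_and_le [IsProbabilityMeasure (ℙ : Measure Ω)]
    (hX0 : ∀ ω, X 0 ω = 0) (hXmeas : ∀ i, Measurable (X i))
    (hXindep : iIndepFun (fun i : ℕ => X (i + 1)) ℙ)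
    (hXunif : ∀ i : ℕ, Measure.map (X (i + 1)) ℙ = (volume : Measure ℝ).restrict (Ioc 0 1))
    (m : ℕ) {t : ℝ} (ht : t ∈ Ioc (0 : ℝ) 1) :
    ℙ {ω | nearestLeft (X · ω) m < t ∧ t ≤ X (m + 1) ω}
      = ENNReal.ofReal ((1 - t ^ (m + 1)) / (m + 1)) := by
  set W : Ω → Finset.range m → ℝ := fun ω j => X (j + 1) ω
  set C : Set (ℝ × (Finset.range m → ℝ)) := {p | t ≤ p.1 ∧ ∀ j, p.2 j ∈ Iio t ∪ Ici p.1}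
  have hC : MeasurableSet C := by measurability
  have hevent : {ω | nearestLeft (X · ω) m < t ∧ t ≤ X (m + 1) ω}
      = (fun ω => (X (m + 1) ω, W ω)) ⁻¹' C := by
    ext ω
    simp [C, W, nearestLeft_lt_iff (X · ω) m (t := t) (by simpa [hX0] using ht.1), and_comm]
  have hslice : ∀ x ∈ Ioc (0 : ℝ) 1, ℙ (W ⁻¹' (Prod.mk x ⁻¹' C))
      = (Icc t 1).indicator (fun x => ENNReal.ofReal ((1 - x + t) ^ m)) x := by
    intro x hx
    by_cases htx : t ≤ x
    · rw [indicator_of_mem (show x ∈ Icc t 1 from ⟨htx, hx.2⟩),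
        ← measure_forall_mem_Iio_union_Ici hXmeas hXindep hXunif m ht.1 htx hx.2]
      congr 1 with ω
      simp [C, W, htx]
    · rw [indicator_of_notMem fun h => htx h.1]
      convert measure_empty (μ := (ℙ : Measure Ω))
      ext ω
      simp [C, htx]
  have hindep : IndepFun (X (m + 1)) W ℙ :=
    hXindep.indepFun_pi_of_notMem (fun i => hXmeas _) Finset.notMem_range_self
  rw [hevent, hindep.measure_preimage_prodMk (hXmeas _)
      (measurable_pi_lambda _ fun j => hXmeas _) hC, hXunif m,
    setLIntegral_congr_fun measurableSet_Ioc hslice, lintegral_indicator measurableSet_Icc,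
    Measure.restrict_restrict measurableSet_Icc,
    inter_eq_left.2 (show Icc t 1 ⊆ Ioc 0 1 from fun y hy => ⟨ht.1.trans_le hy.1, hy.2⟩),
    ← ofReal_integral_eq_lintegral_ofReal, integral_Icc_eq_integral_Ioc,
    ← intervalIntegral.integral_of_le ht.2, integral_one_sub_add_pow]
  · exact (by fun_prop : Continuous fun x : ℝ => (1 - x + t) ^ m).integrableOn_Icc
  · filter_upwards [ae_restrict_mem measurableSet_Icc] with x hx
    exact pow_nonneg (by linarith [hx.2, ht.1]) m

theorem lintegral_sub_nearestLeft [IsProbabilityMeasure (ℙ : Measure Ω)]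
    (hX0 : ∀ ω, X 0 ω = 0) (hXmeas : ∀ i, Measurable (X i))
    (hXindep : iIndepFun (fun i : ℕ => X (i + 1)) ℙ)
    (hXunif : ∀ i : ℕ, Measure.map (X (i + 1)) ℙ = (volume : Measure ℝ).restrict (Ioc 0 1))
    (m : ℕ) :
    ∫⁻ ω, ENNReal.ofReal (X (m + 1) ω - nearestLeft (X · ω) m)
      = ENNReal.ofReal (1 / (m + 2)) := by
  rw [lintegral_ofReal_sub_eq_setLIntegral_measure ℙ (measurable_nearestLeft hXmeas m)
      (hXmeas _) (s := Ioc 0 1) ?_,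
    setLIntegral_congr_fun measurableSet_Ioc
      fun t ht => measure_nearestLeft_lt_and_le hX0 hXmeas hXindep hXunif m ht,
    ← ofReal_integral_eq_lintegral_ofReal, ← intervalIntegral.integral_of_le zero_le_one,
    integral_one_sub_pow_div]
  · exact (by fun_prop : Continuous fun t : ℝ => (1 - t ^ (m + 1)) / (m + 1))
      |>.integrableOn_Icc.mono_set Ioc_subset_Icc_self
  · filter_upwards [ae_restrict_mem measurableSet_Ioc] with t ht
    exact div_nonneg (sub_nonneg.2 (pow_le_one₀ ht.1.le ht.2)) (by positivity)
  · filter_upwards [ae_mem_Ioc_of_map_eq hXmeas hXunif m] with ω hω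
    exact Ioc_subset_Ioc (by simpa [hX0] using le_nearestLeft (X · ω) m) hω.2

theorem integrable_and_integral_edge [IsProbabilityMeasure (ℙ : Measure Ω)]
    (hX0 : ∀ ω, X 0 ω = 0) (hXmeas : ∀ i, Measurable (X i))
    (hXindep : iIndepFun (fun i : ℕ => X (i + 1)) ℙ)
    (hXunif : ∀ i : ℕ, Measure.map (X (i + 1)) ℙ = (volume : Measure ℝ).restrict (Ioc 0 1))
    {Z : ℕ → Ω → ℝ}
    (hZ : ∀ k ω, Z k ω = X k ω - sSup {y : ℝ | ∃ j < k, X j ω = y ∧ y < X k ω}) (m : ℕ) :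
    Integrable (Z (m + 1)) ℙ ∧ ∫ ω, Z (m + 1) ω = 1 / (m + 2) := by
  have hZ_eq : Z (m + 1) =ᵐ[ℙ] fun ω => X (m + 1) ω - nearestLeft (X · ω) m := by
    filter_upwards [ae_mem_Ioc_of_map_eq hXmeas hXunif m] with ω hω
    rw [hZ, sSup_setOf_lt_eq_nearestLeft (X · ω) m (by simpa [hX0] using hω.1)]
  refine integrable_and_integral_eq_of_lintegral_ofReal_eq ?_
    (((hXmeas _).sub (measurable_nearestLeft hXmeas m)).aestronglyMeasurable.congr hZ_eq.symm)
    (by positivity) ?_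
  · filter_upwards [hZ_eq, ae_mem_Ioc_of_map_eq hXmeas hXunif m] with ω hω hmem
    exact hω ▸ sub_nonneg.2 (nearestLeft_le (X · ω) m (by simpa [hX0] using hmem.1.le))
  · exact (lintegral_congr_ae (hZ_eq.fun_comp ENNReal.ofReal)).trans <|
      lintegral_sub_nearestLeft hX0 hXmeas hXindep hXunif m

end UniformPoints

theorem sum_Icc_one_div_add_one (n : ℕ) :
    ∑ i ∈ Finset.Icc 1 n, 1 / ((i : ℝ) + 1) = ∑ i ∈ Finset.Icc 1 (n + 1), 1 / (i : ℝ) - 1 := by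
  induction n with
  | zero => simp
  | succ k ih =>
    rw [Finset.sum_Icc_succ_top (by omega), Finset.sum_Icc_succ_top (by omega : 1 ≤ k + 1 + 1),
      ih]
    push_cast
    ring

theorem stmt5 {Ω : Type*} [MeasureSpace Ω] [IsProbabilityMeasure (ℙ : Measure Ω)]
    (X : ℕ → Ω → ℝ)
    (hX0 : ∀ ω, X 0 ω = 0)
    (hXmeas : ∀ i, Measurable (X i))
    (hXindep : iIndepFun (fun i : ℕ => X (i + 1)) ℙ)
    (hXunif : ∀ i : ℕ, Measure.map (X (i + 1)) ℙ
      = (volume : Measure ℝ).restrict (Set.Ioc 0 1))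
    (Z : ℕ → Ω → ℝ)
    (hZ : ∀ k ω, Z k ω = X k ω - sSup {y : ℝ | ∃ j < k, X j ω = y ∧ y < X k ω})
    (γ : ℝ)
    (hγ : Tendsto (fun k : ℕ => (∑ i ∈ Finset.Icc 1 k, (1 : ℝ) / i) - Real.log k)
      atTop (nhds γ))
    (E : ℕ → ℝ)
    (hE : ∀ n : ℕ, E n = ∫ ω, ∑ i ∈ Finset.Icc 1 n, Z i ω ∂ℙ) :
    (∀ n : ℕ, E n = ∑ i ∈ Finset.Icc 1 n, 1 / ((i : ℝ) + 1)) ∧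
      Tendsto (fun n : ℕ => E n - Real.log n) atTop (nhds (γ - 1)) := by
  have hedge : ∀ i ≥ 1, Integrable (Z i) ℙ ∧ ∫ ω, Z i ω = 1 / ((i : ℝ) + 1) := by
    intro i hi
    obtain ⟨m, rfl⟩ := Nat.exists_eq_add_of_le' hi
    push_cast
    rw [add_assoc, one_add_one_eq_two]
    exact integrable_and_integral_edge hX0 hXmeas hXindep hXunif hZ m
  have hEsum : ∀ n : ℕ, E n = ∑ i ∈ Finset.Icc 1 n, 1 / ((i : ℝ) + 1) := fun n => by
    rw [hE, integral_finsetSum _ fun i hi => (hedge i (Finset.mem_Icc.1 hi).1).1]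
    exact Finset.sum_congr rfl fun i hi => (hedge i (Finset.mem_Icc.1 hi).1).2
  refine ⟨hEsum, ?_⟩
  have hlim := ((hγ.comp (tendsto_add_atTop_nat 1)).add
    tendsto_log_nat_add_one_sub_log).sub_const 1
  rw [add_zero] at hlim
  refine hlim.congr fun n => ?_
  simp only [Function.comp_apply, hEsum, sum_Icc_one_div_add_one]
  push_cast
  ring
end

section
/- For 0 < α < 1, E[D^α(U_m^0)] ~ (Γ(α+1)/(1-α)) · m^{1-α} as m → ∞. -/
open MeasureTheory ProbabilityTheory Real Set Filter
open Topology Nat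

/-!
`Z (m+1) > t` exactly when `X (m+1) > t` and none of `X 1, …, X m` falls in the window
`[X (m+1) - t, X (m+1))`; by independence and uniformity this has probability `(1 - t)^(m+1)`.
The layer cake formula then gives `E[Z_(m+1)^α] = α B(α, m+2) = α (m+1)! / (α (α+1) ⋯ (α+m+1))`.
These moments telescope, `∑_{i ≤ n} E[Z_i^α] = α/(1-α) ((n+1)! / (α ⋯ (α+n)) - 1/α)`, and Euler's
limit formula `n^α n! / (α ⋯ (α+n)) → Γ(α)` gives the growth `Γ(α) n^(1-α)` of the bracket.
-/

def leftPoints (x : ℕ → ℝ) (k : ℕ) : Set ℝ := {y : ℝ | ∃ j < k, x j = y ∧ y < x k}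

/-- The length of the edge of the directed linear tree ending at `x k`: the distance to the
nearest of `x 0, …, x (k-1)` strictly to its left (`sSup ∅ = 0` if there is none). -/
noncomputable def leftGap (x : ℕ → ℝ) (k : ℕ) : ℝ := x k - sSup (leftPoints x k)

section LeftGap

variable (x : ℕ → ℝ) {m : ℕ}

lemma leftPoints_finite (k : ℕ) : (leftPoints x k).Finite :=
  ((Set.finite_Iio k).image x).subset fun _ ⟨j, hj, hxj, _⟩ ↦ ⟨j, hj, hxj⟩

variable {x} (hx0 : x 0 = 0) (hpos : 0 < x (m + 1))
include hx0 hpos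

lemma zero_mem_leftPoints : (0 : ℝ) ∈ leftPoints x (m + 1) :=
  ⟨0, m.succ_pos, hx0, hpos⟩

lemma sSup_leftPoints_mem : sSup (leftPoints x (m + 1)) ∈ leftPoints x (m + 1) :=
  Set.Nonempty.csSup_mem ⟨0, zero_mem_leftPoints hx0 hpos⟩ (leftPoints_finite x _)

lemma sSup_leftPoints_nonneg : 0 ≤ sSup (leftPoints x (m + 1)) :=
  le_csSup (leftPoints_finite x _).bddAbove (zero_mem_leftPoints hx0 hpos)

lemma leftGap_pos : 0 < leftGap x (m + 1) := by
  obtain ⟨_, _, _, hlt⟩ := sSup_leftPoints_mem hx0 hpos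
  exact sub_pos.2 hlt

lemma leftGap_le_self : leftGap x (m + 1) ≤ x (m + 1) :=
  sub_le_self _ (sSup_leftPoints_nonneg hx0 hpos)

lemma lt_leftGap_iff (t : ℝ) :
    t < leftGap x (m + 1) ↔
      t < x (m + 1) ∧ ∀ k < m, x (k + 1) ∉ Ico (x (m + 1) - t) (x (m + 1)) := by
  obtain ⟨j, hj, hxj, hlt⟩ := sSup_leftPoints_mem hx0 hpos
  have hbdd := (leftPoints_finite x (m + 1)).bddAbove
  rw [leftGap, ← hxj]
  constructor
  · intro h
    refine ⟨by linarith [sSup_leftPoints_nonneg hx0 hpos], fun k hk hmem ↦ ?_⟩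
    have := le_csSup hbdd ⟨k + 1, by omega, rfl, hmem.2⟩
    linarith [hmem.1]
  · rintro ⟨ht, hwindow⟩
    rcases j with _ | k
    · linarith
    · by_contra! h
      exact hwindow k (by omega) ⟨by linarith, hxj ▸ hlt⟩

/-- Replacing the points not below `x (m+1)` by `0 = x 0`, itself below, keeps the supremum. -/
lemma leftGap_eq_sub_iSup :
    leftGap x (m + 1) = x (m + 1) - ⨆ j : Fin (m + 1), if x j < x (m + 1) then x j else 0 := by
  rw [leftGap, ← sSup_range]
  congr 2
  ext y
  constructor
  · rintro ⟨j, hj, rfl, hlt⟩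
    exact ⟨⟨j, hj⟩, if_pos hlt⟩
  · rintro ⟨j, rfl⟩
    dsimp only
    split_ifs with h
    · exact ⟨j, j.2, rfl, h⟩
    · exact zero_mem_leftPoints hx0 hpos

end LeftGap

/-- `α i! / (α (α+1) ⋯ (α+i)) = i! Γ(1+α) / Γ(1+α+i)`, the paper's `E[Z_i^α]`. -/
noncomputable def edgeMoment (α : ℝ) (i : ℕ) : ℝ := α * i ! / ∏ j ∈ Finset.range (i + 1), (α + j)

section Asymptotics

variable {α : ℝ}

lemma prod_add_natCast_pos (hα : 0 < α) (n : ℕ) : 0 < ∏ j ∈ Finset.range n, (α + j) :=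
  Finset.prod_pos fun _ _ ↦ by positivity

lemma tendsto_factorial_div_prod (hα : 0 < α) :
    Tendsto (fun n : ℕ ↦ ((n + 1)! : ℝ) / (∏ j ∈ Finset.range (n + 1), (α + j)) /
      (n : ℝ) ^ (1 - α)) atTop (𝓝 (Gamma α)) := by
  have := (GammaSeq_tendsto_Gamma α).mul
    ((tendsto_one_div_atTop_nhds_zero_nat (𝕜 := ℝ)).const_add 1)
  rw [add_zero, mul_one] at this
  refine this.congr' ?_
  filter_upwards [eventually_gt_atTop 0] with n hn
  have hn' : (0 : ℝ) < n := by exact_mod_cast hn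
  have := prod_add_natCast_pos hα (n + 1)
  rw [GammaSeq, factorial_succ, rpow_sub hn', rpow_one]
  push_cast
  field_simp

lemma sum_edgeMoment (hα0 : 0 < α) (hα1 : α < 1) (n : ℕ) :
    ∑ i ∈ Finset.Icc 1 n, edgeMoment α i =
      α / (1 - α) * ((n + 1)! / ∏ j ∈ Finset.range (n + 1), (α + j) - 1 / α) := by
  induction n with
  | zero => simp
  | succ n ih =>
    rw [Finset.sum_Icc_succ_top (by omega), ih, edgeMoment, Finset.prod_range_succ _ (n + 1),
      factorial_succ (n + 1)]
    have := prod_add_natCast_pos hα0 (n + 1)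
    have : α + (n + 1 : ℕ) ≠ 0 := by positivity
    have : 1 - α ≠ 0 := by linarith
    push_cast
    field_simp
    ring

lemma isEquivalent_sum_edgeMoment (hα0 : 0 < α) (hα1 : α < 1) :
    Asymptotics.IsEquivalent atTop (fun n : ℕ ↦ ∑ i ∈ Finset.Icc 1 n, edgeMoment α i)
      (fun n : ℕ ↦ Gamma (α + 1) / (1 - α) * (n : ℝ) ^ (1 - α)) := by
  have hΓ := Gamma_pos_of_pos hα0
  have hpow : Tendsto (fun n : ℕ ↦ (n : ℝ) ^ (1 - α)) atTop atTop :=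
    (tendsto_rpow_atTop (by linarith)).comp tendsto_natCast_atTop_atTop
  have hlim := ((tendsto_factorial_div_prod hα0).div_const (Gamma α)).sub
    ((tendsto_const_nhds (x := (1 : ℝ))).div_atTop
      (hpow.const_mul_atTop (by positivity : 0 < α * Gamma α)))
  rw [div_self hΓ.ne', sub_zero] at hlim
  refine Asymptotics.isEquivalent_of_tendsto_one (hlim.congr' ?_)
  filter_upwards [eventually_gt_atTop 0] with n hn
  have : (0 : ℝ) < (n : ℝ) ^ (1 - α) := rpow_pos_of_pos (by exact_mod_cast hn) _
  have := prod_add_natCast_pos hα0 (n + 1)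
  have : 1 - α ≠ 0 := by linarith
  rw [Pi.div_apply, sum_edgeMoment hα0 hα1, Gamma_add_one hα0.ne']
  field_simp

end Asymptotics

lemma integral_rpow_mul_one_sub_pow {α : ℝ} (hα : 0 < α) (n : ℕ) :
    ∫ t in Ioc (0 : ℝ) 1, t ^ (α - 1) * (1 - t) ^ n =
      n ! / ∏ j ∈ Finset.range (n + 1), (α + j) := by
  have hbeta := Complex.betaIntegral_eval_nat_add_one_right (u := α) (by simpa using hα) n
  rw [Complex.betaIntegral, intervalIntegral.integral_of_le zero_le_one] at hbeta
  apply Complex.ofReal_injective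
  rw [← integral_complex_ofReal]
  push_cast
  rw [← hbeta]
  refine setIntegral_congr_fun measurableSet_Ioc fun t ht ↦ ?_
  rw [add_sub_cancel_right, Complex.cpow_natCast, Complex.ofReal_cpow ht.1.le]
  push_cast
  rfl

lemma integral_rpow_eq_edgeMoment {Ω : Type*} [MeasurableSpace Ω] {μ : Measure Ω} {Y : Ω → ℝ}
    (hY : AEMeasurable Y μ) (hY01 : ∀ᵐ ω ∂μ, Y ω ∈ Icc 0 1) {n : ℕ}
    (htail : ∀ t ∈ Ioo (0 : ℝ) 1, μ {ω | t < Y ω} = ENNReal.ofReal ((1 - t) ^ n))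
    {α : ℝ} (hα : 0 < α) :
    ∫ ω, Y ω ^ α ∂μ = edgeMoment α n := by
  have hY0 : 0 ≤ᵐ[μ] Y := hY01.mono fun _ h ↦ h.1
  have hdensity : ∀ t ∈ Ioi (0 : ℝ), μ {ω | t < Y ω} * ENNReal.ofReal (t ^ (α - 1)) =
      (Ioo 0 1).indicator (fun t ↦ ENNReal.ofReal (t ^ (α - 1) * (1 - t) ^ n)) t := by
    intro t ht
    rcases lt_or_ge t 1 with h1 | h1
    · have : 0 ≤ 1 - t := by linarith
      rw [htail t ⟨ht, h1⟩, indicator_of_mem (show t ∈ Ioo 0 1 from ⟨ht, h1⟩),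
        ← ENNReal.ofReal_mul (by positivity), mul_comm]
    · have : μ {ω | t < Y ω} = 0 := measure_mono_null
        (fun ω (hω : t < Y ω) (h : Y ω ∈ Icc 0 1) ↦ (h1.trans_lt hω).not_ge h.2) (ae_iff.1 hY01)
      rw [this, zero_mul, indicator_of_notMem fun h ↦ h1.not_gt h.2]
  have hnonneg : 0 ≤ᵐ[volume.restrict (Ioo (0 : ℝ) 1)] fun t ↦ t ^ (α - 1) * (1 - t) ^ n := by
    filter_upwards [ae_restrict_mem measurableSet_Ioo] with t ht
    have : 0 ≤ 1 - t := by linarith [ht.2]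
    have := ht.1
    positivity
  calc ∫ ω, Y ω ^ α ∂μ = (∫⁻ ω, ENNReal.ofReal (Y ω ^ α) ∂μ).toReal :=
        integral_eq_lintegral_of_nonneg_ae (hY0.mono fun _ h ↦ rpow_nonneg h _)
          (hY.pow_const α).aestronglyMeasurable
    _ = (ENNReal.ofReal α *
          ∫⁻ t in Ioo 0 1, ENNReal.ofReal (t ^ (α - 1) * (1 - t) ^ n)).toReal := by
      rw [lintegral_rpow_eq_lintegral_meas_lt_mul μ hY0 hY hα,
        setLIntegral_congr_fun measurableSet_Ioi hdensity, lintegral_indicator measurableSet_Ioo,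
        Measure.restrict_restrict measurableSet_Ioo, inter_eq_left.2 Ioo_subset_Ioi_self]
    _ = α * ∫ t in Ioo 0 1, t ^ (α - 1) * (1 - t) ^ n := by
      rw [ENNReal.toReal_mul, ENNReal.toReal_ofReal hα.le,
        integral_eq_lintegral_of_nonneg_ae hnonneg (by fun_prop)]
    _ = edgeMoment α n := by
      rw [← integral_Ioc_eq_integral_Ioo, integral_rpow_mul_one_sub_pow hα, edgeMoment,
        mul_div_assoc]

lemma ProbabilityTheory.IndepFun.measure_preimage_eq_lintegral {Ω α β : Type*}
    [MeasurableSpace Ω] [MeasurableSpace α] [MeasurableSpace β] {μ : Measure Ω}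
    [IsFiniteMeasure μ] {f : Ω → α} {g : Ω → β} (hf : Measurable f) (hg : Measurable g)
    (hfg : IndepFun f g μ) {C : Set (α × β)} (hC : MeasurableSet C) :
    μ {ω | (f ω, g ω) ∈ C} = ∫⁻ x, μ {ω | (x, g ω) ∈ C} ∂(μ.map f) := by
  change μ ((fun ω ↦ (f ω, g ω)) ⁻¹' C) = _
  rw [← Measure.map_apply (hf.prodMk hg) hC,
    (indepFun_iff_map_prod_eq_prod_map_map hf.aemeasurable hg.aemeasurable).1 hfg,
    Measure.prod_apply hC]
  refine lintegral_congr fun x ↦ ?_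
  rw [Measure.map_apply hg (measurable_prodMk_left hC)]
  rfl

lemma volume_restrict_Ioc_compl_Ico {s t : ℝ} (ht0 : 0 ≤ t) (ht : t < s) (hs : s ≤ 1) :
    volume.restrict (Ioc (0 : ℝ) 1) (Ico (s - t) s)ᶜ = ENNReal.ofReal (1 - t) := by
  rw [Measure.restrict_apply measurableSet_Ico.compl, inter_comm, ← sdiff_eq,
    measure_sdiff (show Ico (s - t) s ⊆ Ioc 0 1 from
      fun x hx ↦ ⟨by linarith [hx.1], by linarith [hx.2]⟩)
      measurableSet_Ico.nullMeasurableSet measure_Ico_lt_top.ne,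
    volume_Ioc, volume_Ico, sub_zero, sub_sub_cancel,
    ← ENNReal.ofReal_sub _ ht0]

section Uniform

variable {Ω : Type*} [MeasureSpace Ω] {U : ℕ → Ω → ℝ} (hU : ∀ i, Measurable (U i))
  (hindep : iIndepFun U ℙ) (hunif : ∀ i, Measure.map (U i) ℙ = volume.restrict (Ioc 0 1))
include hU hindep hunif

lemma measure_forall_notMem_Ico (m : ℕ) {s t : ℝ} (ht0 : 0 ≤ t) (ht : t < s) (hs : s ≤ 1) :
    ℙ {ω | ∀ k < m, U k ω ∉ Ico (s - t) s} = ENNReal.ofReal (1 - t) ^ m := by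
  have hinter : {ω | ∀ k < m, U k ω ∉ Ico (s - t) s} =
      ⋂ k ∈ Finset.range m, U k ⁻¹' (Ico (s - t) s)ᶜ := by
    ext; simp
  rw [hinter, hindep.measure_inter_preimage_eq_mul _ fun _ _ ↦ measurableSet_Ico.compl]
  simp_rw [← Measure.map_apply (hU _) measurableSet_Ico.compl, hunif,
    volume_restrict_Ioc_compl_Ico ht0 ht hs, Finset.prod_const, Finset.card_range]

/-- Conditionally on `U m = s > t`, the window `[s - t, s) ⊆ (0, 1]` must avoid the independent
points `U 0, …, U (m-1)`. -/
lemma measure_window_empty [IsProbabilityMeasure (ℙ : Measure Ω)] (m : ℕ) {t : ℝ} (ht0 : 0 ≤ t)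
    (ht1 : t ≤ 1) :
    ℙ {ω | t < U m ω ∧ ∀ k < m, U k ω ∉ Ico (U m ω - t) (U m ω)} =
      ENNReal.ofReal ((1 - t) ^ (m + 1)) := by
  set W : Ω → Finset.range m → ℝ := fun ω k ↦ U k ω
  have hW : Measurable W := measurable_pi_lambda _ fun k ↦ hU k
  have hindepW : IndepFun (U m) W ℙ :=
    (hindep.indepFun_finset {m} (Finset.range m) (by simp) hU).comp
      (measurable_pi_apply (⟨m, Finset.mem_singleton_self m⟩ : ({m} : Finset ℕ))) measurable_id
  set C : Set (ℝ × (Finset.range m → ℝ)) := {p | t < p.1 ∧ ∀ k, p.2 k ∉ Ico (p.1 - t) p.1}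
  have hC : MeasurableSet C := by
    simp only [C, ofPred_and, ofPred_forall]
    refine measurableSet_lt measurable_const measurable_fst |>.inter
      (MeasurableSet.iInter fun k ↦ ?_)
    have hk : Measurable fun p : ℝ × (Finset.range m → ℝ) ↦ p.2 k :=
      (measurable_pi_apply k).comp measurable_snd
    exact ((measurableSet_le (measurable_fst.sub_const t) hk).inter
      (measurableSet_lt hk measurable_fst)).compl
  have hsection : ∀ s ∈ Ioc (0 : ℝ) 1, ℙ {ω | (s, W ω) ∈ C} =
      (Ioc t 1).indicator (fun _ ↦ ENNReal.ofReal (1 - t) ^ m) s := by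
    intro s hs
    by_cases hts : t < s
    · rw [indicator_of_mem (show s ∈ Ioc t 1 from ⟨hts, hs.2⟩),
        ← measure_forall_notMem_Ico hU hindep hunif m ht0 hts hs.2]
      congr
      ext ω
      simp [C, W, hts]
    · rw [indicator_of_notMem fun h ↦ hts h.1]
      simp [C, hts]
  calc ℙ {ω | t < U m ω ∧ ∀ k < m, U k ω ∉ Ico (U m ω - t) (U m ω)}
      = ℙ {ω | (U m ω, W ω) ∈ C} := by congr; ext ω; simp [C, W]
    _ = ∫⁻ s in Ioc 0 1, (Ioc t 1).indicator (fun _ ↦ ENNReal.ofReal (1 - t) ^ m) s := by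
      rw [hindepW.measure_preimage_eq_lintegral (hU m) hW hC, hunif]
      exact setLIntegral_congr_fun measurableSet_Ioc hsection
    _ = ENNReal.ofReal ((1 - t) ^ (m + 1)) := by
      rw [lintegral_indicator_const measurableSet_Ioc, Measure.restrict_apply measurableSet_Ioc,
        inter_eq_left.2 (Ioc_subset_Ioc_left ht0), volume_Ioc,
        ← ENNReal.ofReal_pow (sub_nonneg.2 ht1),
        ← ENNReal.ofReal_mul (pow_nonneg (sub_nonneg.2 ht1) m), pow_succ]

end Uniform

lemma ae_mem_of_map_eq_restrict {Ω β : Type*} [MeasurableSpace Ω] [MeasurableSpace β]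
    {μ : Measure Ω} {ν : Measure β} {f : Ω → β} {s : Set β} (hf : AEMeasurable f μ)
    (hs : MeasurableSet s) (hfs : μ.map f = ν.restrict s) : ∀ᵐ ω ∂μ, f ω ∈ s :=
  ae_of_ae_map hf (hfs ▸ ae_restrict_mem hs)

section LinearTree

variable {Ω : Type*} [MeasureSpace Ω] {X : ℕ → Ω → ℝ}
  (hX0 : ∀ ω, X 0 ω = 0) (hXmeas : ∀ i, Measurable (X i))
  (hXindep : iIndepFun (fun i ↦ X (i + 1)) ℙ)
  (hXunif : ∀ i, Measure.map (X (i + 1)) ℙ = volume.restrict (Ioc 0 1))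

include hX0 hXmeas hXunif

lemma ae_leftGap_mem_Icc (m : ℕ) : ∀ᵐ ω ∂ℙ, leftGap (X · ω) (m + 1) ∈ Icc 0 1 := by
  filter_upwards [ae_mem_of_map_eq_restrict (hXmeas _).aemeasurable measurableSet_Ioc (hXunif m)]
    with ω hω
  exact ⟨(leftGap_pos (hX0 ω) hω.1).le, (leftGap_le_self (hX0 ω) hω.1).trans hω.2⟩

lemma aemeasurable_leftGap (m : ℕ) : AEMeasurable (fun ω ↦ leftGap (X · ω) (m + 1)) ℙ := by
  refine ⟨fun ω ↦ X (m + 1) ω - ⨆ j : Fin (m + 1), if X j ω < X (m + 1) ω then X j ω else 0,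
    (hXmeas _).sub (Measurable.iSup fun j ↦ Measurable.ite
      (measurableSet_lt (hXmeas j) (hXmeas _)) (hXmeas j) measurable_const), ?_⟩
  filter_upwards [ae_mem_of_map_eq_restrict (hXmeas _).aemeasurable measurableSet_Ioc (hXunif m)]
    with ω hω
  exact leftGap_eq_sub_iSup (hX0 ω) hω.1

lemma integrable_leftGap_rpow [IsProbabilityMeasure (ℙ : Measure Ω)] (m : ℕ) {α : ℝ}
    (hα : 0 ≤ α) : Integrable (fun ω ↦ leftGap (X · ω) (m + 1) ^ α) ℙ := by
  refine .of_bound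
    ((aemeasurable_leftGap hX0 hXmeas hXunif m).pow_const α).aestronglyMeasurable 1 ?_
  filter_upwards [ae_leftGap_mem_Icc hX0 hXmeas hXunif m] with ω hω
  rw [norm_of_nonneg (rpow_nonneg hω.1 α)]
  exact rpow_le_one hω.1 hω.2 hα

include hXindep

lemma measure_lt_leftGap [IsProbabilityMeasure (ℙ : Measure Ω)] (m : ℕ) {t : ℝ} (ht0 : 0 ≤ t)
    (ht1 : t ≤ 1) :
    ℙ {ω | t < leftGap (X · ω) (m + 1)} = ENNReal.ofReal ((1 - t) ^ (m + 1)) := by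
  rw [← measure_window_empty (fun i ↦ hXmeas (i + 1)) hXindep hXunif m ht0 ht1]
  refine measure_congr ?_
  filter_upwards [ae_mem_of_map_eq_restrict (hXmeas _).aemeasurable measurableSet_Ioc (hXunif m)]
    with ω hω
  exact propext (lt_leftGap_iff (hX0 ω) hω.1 t)

lemma integral_leftGap_rpow [IsProbabilityMeasure (ℙ : Measure Ω)] (m : ℕ) {α : ℝ}
    (hα : 0 < α) :
    ∫ ω, leftGap (X · ω) (m + 1) ^ α ∂ℙ = edgeMoment α (m + 1) :=
  integral_rpow_eq_edgeMoment (aemeasurable_leftGap hX0 hXmeas hXunif m)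
    (ae_leftGap_mem_Icc hX0 hXmeas hXunif m)
    (fun _ ht ↦ measure_lt_leftGap hX0 hXmeas hXindep hXunif m ht.1.le ht.2.le) hα

end LinearTree

theorem stmt6 {Ω : Type*} [MeasureSpace Ω] [IsProbabilityMeasure (ℙ : Measure Ω)]
    (X : ℕ → Ω → ℝ)
    (hX0 : ∀ ω, X 0 ω = 0)
    (hXmeas : ∀ i, Measurable (X i))
    (hXindep : iIndepFun (fun i : ℕ => X (i + 1)) ℙ)
    (hXunif : ∀ i : ℕ, Measure.map (X (i + 1)) ℙ
      = (volume : Measure ℝ).restrict (Set.Ioc 0 1))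
    (Z : ℕ → Ω → ℝ)
    (hZ : ∀ k ω, Z k ω = X k ω - sSup {y : ℝ | ∃ j < k, X j ω = y ∧ y < X k ω})
    (α : ℝ) (hα0 : 0 < α) (hα1 : α < 1)
    (E : ℕ → ℝ)
    (hE : ∀ n : ℕ, E n = ∫ ω, ∑ i ∈ Finset.Icc 1 n, Z i ω ^ α ∂ℙ) :
    Asymptotics.IsEquivalent atTop (fun n : ℕ => E n)
      (fun n : ℕ => Real.Gamma (α + 1) / (1 - α) * (n : ℝ) ^ ((1 : ℝ) - α)) := by
  have hZ_eq : ∀ i, Z i = fun ω ↦ leftGap (X · ω) i := fun i ↦ funext (hZ i)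
  refine (isEquivalent_sum_edgeMoment hα0 hα1).congr_left (Eventually.of_forall fun n ↦ ?_)
  dsimp only
  rw [hE, integral_finsetSum]
  · refine (Finset.sum_congr rfl fun i hi ↦ ?_).symm
    obtain ⟨m, rfl⟩ := Nat.exists_eq_add_one.2 (Finset.mem_Icc.1 hi).1
    rw [hZ_eq, integral_leftGap_rpow hX0 hXmeas hXindep hXunif m hα0]
  · intro i hi
    obtain ⟨m, rfl⟩ := Nat.exists_eq_add_one.2 (Finset.mem_Icc.1 hi).1
    rw [hZ_eq]
    exact integrable_leftGap_rpow hX0 hXmeas hXunif m hα0.le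
end

section
/- Cov[Z_1^α, Z_2^α] = ((α-2)Γ(2α+3) + 2(α+2)Γ(α+2)^2) / (2(α+1)^2(α+2)Γ(2α+3)) for α > 0; this covariance is zero if and only if α = 1, positive for α > 1 and negative for 0 < α < 1. -/
open MeasureTheory ProbabilityTheory Real Set Filter

/-!
Given `X₁ = x`, `Z₂` is `X₂ - x` or `X₂` according as `X₂ > x` or not, so
`E[Z₂^α | X₁ = x] = Φ(x) / (α + 1)` with `Φ(x) = x^(α+1) + (1-x)^(α+1)`, and
`Cov[Z₁^α, Z₂^α] = Cov[U^α, Φ(U)] / (α + 1)` for `U` uniform on `(0, 1]`. The Beta integral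
`∫₀¹ x^α (1-x)^(α+1) dx = Γ(α+1) Γ(α+2) / Γ(2α+3)` gives the closed form.

For the sign, the symmetry `U ↦ 1 - U` gives `Cov[U^α, Φ(U)] = Cov[F(U), Φ(U)] / 2` with
`F(x) = x^α + (1-x)^α`. Both `F` and `Φ` are functions of `max(x, 1-x)`; `Φ` is strictly
increasing in it, while `F` is strictly increasing for `α > 1`, strictly decreasing for `α < 1` and
constant for `α = 1`. Chebyshev's identity
`Cov[f(U), g(U)] = E[(f(U) - f(V)) (g(U) - g(V))] / 2`, with `V` an independent copy of `U`,
then decides the sign.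
-/

section Covariance

variable {Ω Ω' : Type*} [MeasurableSpace Ω] [MeasurableSpace Ω'] {μ : Measure Ω}

lemma covariance_congr_ae {X X' Y Y' : Ω → ℝ} (hX : X =ᵐ[μ] X') (hY : Y =ᵐ[μ] Y') :
    cov[X, Y; μ] = cov[X', Y'; μ] := by
  unfold covariance
  rw [integral_congr_ae hX, integral_congr_ae hY]
  exact integral_congr_ae (by filter_upwards [hX, hY] with ω hXω hYω; rw [hXω, hYω])

lemma covariance_comp_fst_prod [IsProbabilityMeasure μ] {ν : Measure Ω'} [IsProbabilityMeasure ν]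
    {f : Ω → ℝ} {g : Ω × Ω' → ℝ} (hf : MemLp f 2 μ) (hg : MemLp g 2 (μ.prod ν)) :
    cov[fun p => f p.1, g; μ.prod ν] = cov[f, fun x => ∫ y, g (x, y) ∂ν; μ] := by
  have hg_int := hg.integrable one_le_two
  unfold covariance
  rw [integral_fun_fst, integral_prod g hg_int]
  set a := ∫ x, f x ∂μ
  set c := ∫ x, ∫ y, g (x, y) ∂ν ∂μ
  have hint : Integrable (fun p : Ω × Ω' => (f p.1 - a) * (g p - c)) (μ.prod ν) :=
    ((hf.comp_fst ν).sub (memLp_const a)).integrable_mul (hg.sub (memLp_const c))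
  simp only [probReal_univ, one_smul]
  rw [integral_prod _ hint]
  refine integral_congr_ae ?_
  filter_upwards [hg_int.prod_right_ae] with x hx
  rw [integral_const_mul, integral_sub hx (integrable_const _), integral_const]
  simp

lemma covariance_eq_half_integral_prod [IsProbabilityMeasure μ] {f g : Ω → ℝ}
    (hf : MemLp f 2 μ) (hg : MemLp g 2 μ) :
    cov[f, g; μ] = (∫ p, (f p.1 - f p.2) * (g p.1 - g p.2) ∂μ.prod μ) / 2 := by
  have h11 : Integrable (fun p : Ω × Ω => f p.1 * g p.1) (μ.prod μ) :=
    (hf.comp_fst μ).integrable_mul (hg.comp_fst μ)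
  have h22 : Integrable (fun p : Ω × Ω => f p.2 * g p.2) (μ.prod μ) :=
    (hf.comp_snd μ).integrable_mul (hg.comp_snd μ)
  have h12 : Integrable (fun p : Ω × Ω => f p.1 * g p.2) (μ.prod μ) :=
    (hf.comp_fst μ).integrable_mul (hg.comp_snd μ)
  have h21 : Integrable (fun p : Ω × Ω => g p.1 * f p.2) (μ.prod μ) :=
    (hg.comp_fst μ).integrable_mul (hf.comp_snd μ)
  have hexpand : (fun p : Ω × Ω => (f p.1 - f p.2) * (g p.1 - g p.2)) = fun p =>
      (f p.1 * g p.1 + f p.2 * g p.2) - (f p.1 * g p.2 + g p.1 * f p.2) := by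
    ext p; ring
  have hsame : Integrable (fun p : Ω × Ω => f p.1 * g p.1 + f p.2 * g p.2) (μ.prod μ) :=
    h11.add h22
  have hcross : Integrable (fun p : Ω × Ω => f p.1 * g p.2 + g p.1 * f p.2) (μ.prod μ) :=
    h12.add h21
  rw [hexpand, integral_sub hsame hcross, integral_add h11 h22,
    integral_add h12 h21, integral_fun_fst (fun x => f x * g x),
    integral_fun_snd (fun x => f x * g x), integral_prod_mul, integral_prod_mul,
    covariance_eq_sub hf hg]
  simp only [probReal_univ, one_smul, Pi.mul_apply]
  ring

lemma covariance_pos_of_sub_mul_sub [IsProbabilityMeasure μ] {f g : Ω → ℝ}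
    (hf : MemLp f 2 μ) (hg : MemLp g 2 μ)
    (hnonneg : ∀ᵐ p ∂μ.prod μ, 0 ≤ (f p.1 - f p.2) * (g p.1 - g p.2))
    (hpos : 0 < μ.prod μ {p | 0 < (f p.1 - f p.2) * (g p.1 - g p.2)}) :
    0 < cov[f, g; μ] := by
  have hint : Integrable (fun p : Ω × Ω => (f p.1 - f p.2) * (g p.1 - g p.2)) (μ.prod μ) :=
    ((hf.comp_fst μ).sub (hf.comp_snd μ)).integrable_mul ((hg.comp_fst μ).sub (hg.comp_snd μ))
  rw [covariance_eq_half_integral_prod hf hg]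
  refine half_pos ((integral_pos_iff_support_of_nonneg_ae hnonneg hint).2 ?_)
  exact hpos.trans_le (measure_mono fun p hp => ne_of_gt hp)

end Covariance

noncomputable abbrev unif01 : Measure ℝ := volume.restrict (Ioc 0 1)

section Uniform

instance : IsProbabilityMeasure unif01 := ⟨by simp⟩

lemma memLp_unif_of_continuousOn {f : ℝ → ℝ} (hf : ContinuousOn f (Icc 0 1)) (p : ENNReal) :
    MemLp f p unif01 := by
  obtain ⟨C, hC⟩ := isCompact_Icc.exists_bound_of_continuousOn hf
  exact .of_bound ((hf.mono Ioc_subset_Icc_self).aestronglyMeasurable measurableSet_Ioc) C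
    ((ae_restrict_iff' measurableSet_Ioc).2 (ae_of_all _ fun x hx => hC x (Ioc_subset_Icc_self hx)))

lemma memLp_unif_rpow {β : ℝ} (hβ : 0 ≤ β) (p : ENNReal) : MemLp (fun x => x ^ β) p unif01 :=
  memLp_unif_of_continuousOn (continuous_rpow_const hβ).continuousOn p

lemma integral_unif_comp_one_sub (f : ℝ → ℝ) : ∫ x, f (1 - x) ∂unif01 = ∫ x, f x ∂unif01 := by
  rw [← intervalIntegral.integral_of_le zero_le_one, ← intervalIntegral.integral_of_le zero_le_one]
  simp [intervalIntegral.integral_comp_sub_left (a := 0) (b := 1) f 1]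

lemma covariance_unif_comp_one_sub (f g : ℝ → ℝ) :
    cov[fun x => f (1 - x), fun x => g (1 - x); unif01] = cov[f, g; unif01] := by
  unfold covariance
  rw [integral_unif_comp_one_sub f, integral_unif_comp_one_sub g]
  exact integral_unif_comp_one_sub fun x => (f x - ∫ y, f y ∂unif01) * (g x - ∫ y, g y ∂unif01)

lemma integral_unif_rpow {β : ℝ} (hβ : -1 < β) : ∫ x, x ^ β ∂unif01 = 1 / (β + 1) := by
  rw [← intervalIntegral.integral_of_le zero_le_one, integral_rpow (Or.inl hβ),
    zero_rpow (by linarith), one_rpow, sub_zero]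

lemma integral_unif_rpow_mul_one_sub_rpow {a b : ℝ} (ha : -1 < a) (hb : -1 < b) :
    ∫ x, x ^ a * (1 - x) ^ b ∂unif01 = Gamma (a + 1) * Gamma (b + 1) / Gamma (a + b + 2) := by
  have hG : Gamma (a + b + 2) ≠ 0 := (Gamma_pos_of_pos (by linarith)).ne'
  have hbeta := Complex.Gamma_mul_Gamma_eq_betaIntegral (s := ((a + 1 : ℝ) : ℂ))
    (t := ((b + 1 : ℝ) : ℂ)) (by simp; linarith) (by simp; linarith)
  have hreal : Complex.betaIntegral ((a + 1 : ℝ) : ℂ) ((b + 1 : ℝ) : ℂ)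
      = ((∫ x, x ^ a * (1 - x) ^ b ∂unif01 : ℝ) : ℂ) := by
    rw [Complex.betaIntegral, ← intervalIntegral.integral_of_le zero_le_one,
      ← intervalIntegral.integral_ofReal]
    refine intervalIntegral.integral_congr fun x hx => ?_
    rw [uIcc_of_le zero_le_one] at hx
    push_cast
    rw [Complex.ofReal_cpow hx.1, Complex.ofReal_cpow (by linarith [hx.2] : (0 : ℝ) ≤ 1 - x)]
    push_cast
    ring_nf
  rw [hreal, ← Complex.ofReal_add, Complex.Gamma_ofReal, Complex.Gamma_ofReal,
    Complex.Gamma_ofReal, ← Complex.ofReal_mul, ← Complex.ofReal_mul] at hbeta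
  rw [eq_div_iff hG, mul_comm, show a + b + 2 = a + 1 + (b + 1) by ring]
  exact_mod_cast hbeta.symm

lemma ae_unif_prod_mem : ∀ᵐ p ∂unif01.prod unif01, p ∈ Ioc (0 : ℝ) 1 ×ˢ Ioc (0 : ℝ) 1 := by
  rw [Measure.prod_restrict]
  exact ae_restrict_mem (measurableSet_Ioc.prod measurableSet_Ioc)

lemma unif_Ioc_pos {a b : ℝ} (ha : 0 ≤ a) (hab : a < b) (hb : b ≤ 1) : 0 < unif01 (Ioc a b) := by
  rw [Measure.restrict_apply measurableSet_Ioc,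
    inter_eq_self_of_subset_left (Ioc_subset_Ioc ha hb), Real.volume_Ioc]
  exact ENNReal.ofReal_pos.2 (by linarith)

end Uniform

noncomputable def symmRpow (β x : ℝ) : ℝ := x ^ β + (1 - x) ^ β

section SymmRpow

variable {β : ℝ}

lemma continuous_symmRpow (hβ : 0 ≤ β) : Continuous (symmRpow β) := by
  unfold symmRpow
  fun_prop (disch := assumption)

lemma memLp_symmRpow (hβ : 0 ≤ β) (p : ENNReal) : MemLp (symmRpow β) p unif01 :=
  memLp_unif_of_continuousOn (continuous_symmRpow hβ).continuousOn p

lemma symmRpow_one_sub (β x : ℝ) : symmRpow β (1 - x) = symmRpow β x := by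
  rw [symmRpow, symmRpow, sub_sub_cancel, add_comm]

lemma symmRpow_one : symmRpow 1 = fun _ => 1 := by
  ext x
  simp [symmRpow]

lemma integral_unif_symmRpow (hβ : 0 ≤ β) : ∫ x, symmRpow β x ∂unif01 = 2 / (β + 1) := by
  have hint : Integrable (fun x : ℝ => x ^ β) unif01 := (memLp_unif_rpow hβ 1).integrable le_rfl
  have hint' : Integrable (fun x : ℝ => (1 - x) ^ β) unif01 :=
    (memLp_unif_of_continuousOn (by fun_prop (disch := assumption)) 1).integrable le_rfl
  simp only [symmRpow]
  rw [integral_add hint hint', integral_unif_comp_one_sub (· ^ β), integral_unif_rpow (by linarith)]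
  ring

lemma hasDerivAt_symmRpow {x : ℝ} (hx0 : 0 < x) (hx1 : x < 1) :
    HasDerivAt (symmRpow β) (β * x ^ (β - 1) - β * (1 - x) ^ (β - 1)) x := by
  have hleft : HasDerivAt (fun x : ℝ => x ^ β) (β * x ^ (β - 1)) x :=
    hasDerivAt_rpow_const (Or.inl hx0.ne')
  have hright : HasDerivAt (fun x : ℝ => (1 - x) ^ β) (β * (1 - x) ^ (β - 1) * -1) x :=
    (hasDerivAt_rpow_const (Or.inl (sub_pos.2 hx1).ne')).comp x ((hasDerivAt_id x).const_sub 1)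
  exact (hleft.fun_add hright).congr_deriv (by ring)

lemma strictMonoOn_symmRpow (hβ : 1 < β) : StrictMonoOn (symmRpow β) (Icc (1 / 2) 1) := by
  refine strictMonoOn_of_deriv_pos (convex_Icc _ _)
    (continuous_symmRpow (by linarith)).continuousOn fun x hx => ?_
  rw [interior_Icc] at hx
  rw [(hasDerivAt_symmRpow (by linarith [hx.1]) hx.2).deriv, ← mul_sub]
  have : (1 - x) ^ (β - 1) < x ^ (β - 1) :=
    rpow_lt_rpow (by linarith [hx.2]) (by linarith [hx.1]) (by linarith)
  exact mul_pos (by linarith) (by linarith)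

lemma strictAntiOn_symmRpow (hβ0 : 0 < β) (hβ1 : β < 1) :
    StrictAntiOn (symmRpow β) (Icc (1 / 2) 1) := by
  refine strictAntiOn_of_deriv_neg (convex_Icc _ _)
    (continuous_symmRpow hβ0.le).continuousOn fun x hx => ?_
  rw [interior_Icc] at hx
  rw [(hasDerivAt_symmRpow (by linarith [hx.1]) hx.2).deriv, ← mul_sub]
  have : x ^ (β - 1) < (1 - x) ^ (β - 1) :=
    rpow_lt_rpow_of_neg (by linarith [hx.2]) (by linarith [hx.1]) (by linarith)
  exact mul_neg_of_pos_of_neg hβ0 (by linarith)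

end SymmRpow

section Chebyshev

lemma eq_comp_max_one_sub {f : ℝ → ℝ} (hf : ∀ x, f (1 - x) = f x) (x : ℝ) :
    f x = f (max x (1 - x)) := by
  rcases le_total x (1 - x) with h | h
  · rw [max_eq_right h, hf]
  · rw [max_eq_left h]

lemma max_one_sub_mem_Icc {x : ℝ} (hx : x ∈ Icc (0 : ℝ) 1) : max x (1 - x) ∈ Icc (1 / 2) 1 :=
  ⟨by rcases le_total x (1 - x) with h | h <;> simp [h] <;> linarith,
    max_le hx.2 (by linarith [hx.1])⟩

lemma StrictMonoOn.sub_mul_sub_pos {f g : ℝ → ℝ} {s : Set ℝ} (hf : StrictMonoOn f s)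
    (hg : StrictMonoOn g s) {a b : ℝ} (ha : a ∈ s) (hb : b ∈ s) (hab : a ≠ b) :
    0 < (f a - f b) * (g a - g b) := by
  rcases hab.lt_or_gt with h | h
  · exact mul_pos_of_neg_of_neg (sub_neg.2 (hf ha hb h)) (sub_neg.2 (hg ha hb h))
  · exact mul_pos (sub_pos.2 (hf hb ha h)) (sub_pos.2 (hg hb ha h))

lemma covariance_unif_pos_of_strictMonoOn {f g : ℝ → ℝ} (hf : MemLp f 2 unif01)
    (hg : MemLp g 2 unif01) (hf_symm : ∀ x, f (1 - x) = f x) (hg_symm : ∀ x, g (1 - x) = g x)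
    (hf_mono : StrictMonoOn f (Icc (1 / 2) 1)) (hg_mono : StrictMonoOn g (Icc (1 / 2) 1)) :
    0 < cov[f, g; unif01] := by
  refine covariance_pos_of_sub_mul_sub hf hg ?_ ?_
  · filter_upwards [ae_unif_prod_mem] with p hp
    rw [eq_comp_max_one_sub hf_symm p.1, eq_comp_max_one_sub hf_symm p.2,
      eq_comp_max_one_sub hg_symm p.1, eq_comp_max_one_sub hg_symm p.2]
    rcases eq_or_ne (max p.1 (1 - p.1)) (max p.2 (1 - p.2)) with h | h
    · simp [h]
    · exact (hf_mono.sub_mul_sub_pos hg_mono (max_one_sub_mem_Icc (Ioc_subset_Icc_self hp.1))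
        (max_one_sub_mem_Icc (Ioc_subset_Icc_self hp.2)) h).le
  · have hrect : 0 < (unif01.prod unif01) (Ioc (1 / 2) (3 / 4) ×ˢ Ioc (3 / 4) 1) := by
      rw [Measure.prod_prod]
      exact ENNReal.mul_pos (unif_Ioc_pos (by norm_num) (by norm_num) (by norm_num)).ne'
        (unif_Ioc_pos (by norm_num) (by norm_num) le_rfl).ne'
    refine hrect.trans_le (measure_mono fun p ⟨⟨h1, h2⟩, h3, h4⟩ => ?_)
    exact hf_mono.sub_mul_sub_pos hg_mono ⟨h1.le, by linarith⟩ ⟨by linarith, h4⟩ (by linarith)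

end Chebyshev

section Covariances

variable {α β : ℝ}

lemma covariance_symmRpow_pos (hα : 1 < α) (hβ : 1 < β) :
    0 < cov[symmRpow α, symmRpow β; unif01] :=
  covariance_unif_pos_of_strictMonoOn (memLp_symmRpow (by linarith) 2)
    (memLp_symmRpow (by linarith) 2) (symmRpow_one_sub α) (symmRpow_one_sub β)
    (strictMonoOn_symmRpow hα) (strictMonoOn_symmRpow hβ)

lemma covariance_symmRpow_neg (hα0 : 0 < α) (hα1 : α < 1) (hβ : 1 < β) :
    cov[symmRpow α, symmRpow β; unif01] < 0 := by
  have := covariance_unif_pos_of_strictMonoOn (f := fun x => -symmRpow α x)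
    (memLp_symmRpow hα0.le 2).neg (memLp_symmRpow (by linarith) 2)
    (fun x => by rw [symmRpow_one_sub]) (symmRpow_one_sub β)
    (strictAntiOn_symmRpow hα0 hα1).neg (strictMonoOn_symmRpow hβ)
  rwa [covariance_fun_neg_left, neg_pos] at this

lemma covariance_rpow_symmRpow (hα : 0 ≤ α) (hβ : 0 ≤ β) :
    cov[fun x => x ^ α, symmRpow β; unif01] = cov[symmRpow α, symmRpow β; unif01] / 2 := by
  have hreflect : cov[fun x => (1 - x) ^ α, symmRpow β; unif01]
      = cov[fun x => x ^ α, symmRpow β; unif01] := by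
    simpa only [symmRpow_one_sub] using covariance_unif_comp_one_sub (· ^ α) (symmRpow β)
  have hsplit : cov[symmRpow α, symmRpow β; unif01]
      = cov[fun x => x ^ α, symmRpow β; unif01] + cov[fun x => (1 - x) ^ α, symmRpow β; unif01] :=
    covariance_add_left (memLp_unif_rpow hα 2)
      (memLp_unif_of_continuousOn (by fun_prop (disch := assumption)) 2) (memLp_symmRpow hβ 2)
  linarith

lemma covariance_rpow_symmRpow_eq (hα : 0 ≤ α) :
    cov[fun x => x ^ α, symmRpow (α + 1); unif01]
      = 1 / (2 * α + 2) + Gamma (α + 1) * Gamma (α + 2) / Gamma (2 * α + 3)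
        - 2 / ((α + 1) * (α + 2)) := by
  have hprod : ∀ x ∈ Ioc (0 : ℝ) 1, x ^ α * symmRpow (α + 1) x
      = x ^ (2 * α + 1) + x ^ α * (1 - x) ^ (α + 1) := fun x hx => by
    rw [symmRpow, mul_add, ← rpow_add hx.1]
    ring_nf
  have hint₁ : Integrable (fun x : ℝ => x ^ (2 * α + 1)) unif01 :=
    (memLp_unif_rpow (by linarith) 1).integrable le_rfl
  have hint₂ : Integrable (fun x : ℝ => x ^ α * (1 - x) ^ (α + 1)) unif01 :=
    (memLp_unif_of_continuousOn (by fun_prop (disch := linarith)) 1).integrable le_rfl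
  rw [covariance_eq_sub (memLp_unif_rpow hα 2) (memLp_symmRpow (by linarith) 2)]
  simp only [Pi.mul_apply]
  rw [setIntegral_congr_fun measurableSet_Ioc hprod, integral_add hint₁ hint₂,
    integral_unif_rpow (by linarith),
    integral_unif_rpow_mul_one_sub_rpow (by linarith) (by linarith),
    integral_unif_rpow (by linarith), integral_unif_symmRpow (by linarith),
    show α + (α + 1) + 2 = 2 * α + 3 by ring, show α + 1 + 1 = α + 2 by ring]
  field_simp
  ring

end Covariances

/-- The paper's `Z₂` at `X₁ = x`, `X₂ = y`, when `0 < x` and `0 < y`. -/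
noncomputable def spacing (x y : ℝ) : ℝ := y - if x < y then x else 0

section Spacing

variable {α : ℝ}

lemma measurable_spacing : Measurable fun p : ℝ × ℝ => spacing p.1 p.2 :=
  measurable_snd.sub (Measurable.ite (measurableSet_lt measurable_fst measurable_snd)
    measurable_fst measurable_const)

lemma spacing_mem_Icc {x y : ℝ} (hx : x ∈ Ioc (0 : ℝ) 1) (hy : y ∈ Ioc (0 : ℝ) 1) :
    spacing x y ∈ Icc 0 1 := by
  obtain ⟨hx0, hx1⟩ := hx
  obtain ⟨hy0, hy1⟩ := hy
  unfold spacing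
  split_ifs with h <;> constructor <;> linarith

lemma memLp_spacing_rpow (hα : 0 ≤ α) :
    MemLp (fun p : ℝ × ℝ => spacing p.1 p.2 ^ α) 2 (unif01.prod unif01) := by
  refine .of_bound ((measurable_spacing.pow_const α).aestronglyMeasurable) 1 ?_
  filter_upwards [ae_unif_prod_mem] with p ⟨hx, hy⟩
  obtain ⟨h0, h1⟩ := spacing_mem_Icc hx hy
  rw [norm_of_nonneg (rpow_nonneg h0 α)]
  exact rpow_le_one h0 h1 hα

lemma integral_unif_spacing_rpow (hα : 0 ≤ α) {x : ℝ} (hx : x ∈ Icc (0 : ℝ) 1) :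
    ∫ y, spacing x y ^ α ∂unif01 = symmRpow (α + 1) x / (α + 1) := by
  have hα1 : α + 1 ≠ 0 := by positivity
  have below : EqOn (fun y => spacing x y ^ α) (fun y => y ^ α) (Icc 0 x) := fun y hy => by
    simp only [spacing, if_neg (not_lt.2 hy.2), sub_zero]
  have above : EqOn (fun y => spacing x y ^ α) (fun y => (y - x) ^ α) (Ioc x 1) := fun y hy => by
    simp only [spacing, if_pos hy.1]
  have int_below : IntervalIntegrable (fun y => spacing x y ^ α) volume 0 x :=
    (intervalIntegral.intervalIntegrable_rpow (Or.inl hα)).congr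
      (below.mono (by rw [uIoc_of_le hx.1]; exact Ioc_subset_Icc_self)).symm
  have int_above : IntervalIntegrable (fun y => spacing x y ^ α) volume x 1 := by
    have shifted := (intervalIntegral.intervalIntegrable_rpow (a := 0) (b := 1 - x)
      (Or.inl hα)).comp_sub_right x
    rw [zero_add, sub_add_cancel] at shifted
    exact shifted.congr (by rw [uIoc_of_le hx.2]; exact above.symm)
  have eq_below : ∫ y in (0 : ℝ)..x, spacing x y ^ α = x ^ (α + 1) / (α + 1) := by
    rw [intervalIntegral.integral_congr (below.mono (by rw [uIcc_of_le hx.1])),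
      integral_rpow (Or.inl (by linarith)), zero_rpow hα1, sub_zero]
  have eq_above : ∫ y in x..(1 : ℝ), spacing x y ^ α = (1 - x) ^ (α + 1) / (α + 1) := by
    rw [intervalIntegral.integral_congr_ae (g := fun y => (y - x) ^ α)
        (ae_of_all _ fun y hy => above (by rwa [uIoc_of_le hx.2] at hy)),
      intervalIntegral.integral_comp_sub_right (· ^ α), sub_self,
      integral_rpow (Or.inl (by linarith)), zero_rpow hα1, sub_zero]
  rw [← intervalIntegral.integral_of_le zero_le_one,
    ← intervalIntegral.integral_add_adjacent_intervals int_below int_above, eq_below, eq_above,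
    symmRpow, add_div]

lemma covariance_rpow_spacing (hα : 0 ≤ α) :
    cov[fun p : ℝ × ℝ => p.1 ^ α, fun p => spacing p.1 p.2 ^ α; unif01.prod unif01]
      = cov[fun x => x ^ α, symmRpow (α + 1); unif01] / (α + 1) := by
  rw [covariance_comp_fst_prod (memLp_unif_rpow hα 2)
    (memLp_spacing_rpow hα), ← covariance_fun_div_right]
  refine covariance_congr_ae .rfl ?_
  filter_upwards [ae_restrict_mem measurableSet_Ioc] with x hx
  exact integral_unif_spacing_rpow hα (Ioc_subset_Icc_self hx)

end Spacing

section PreviousMaximum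

variable {x : ℕ → ℝ}

lemma sub_sSup_prev_one (hx0 : x 0 = 0) (hx1 : 0 < x 1) :
    x 1 - sSup {y | ∃ j < 1, x j = y ∧ y < x 1} = x 1 := by
  have hset : {y | ∃ j < 1, x j = y ∧ y < x 1} = {0} := by
    ext y
    simp only [Nat.lt_one_iff, exists_eq_left, hx0, mem_ofPred_eq, mem_singleton_iff]
    constructor
    · exact fun h => h.1.symm
    · rintro rfl; exact ⟨rfl, hx1⟩
  rw [hset, csSup_singleton, sub_zero]

lemma sub_sSup_prev_two (hx0 : x 0 = 0) (hx1 : 0 < x 1) (hx2 : 0 < x 2) :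
    x 2 - sSup {y | ∃ j < 2, x j = y ∧ y < x 2} = spacing (x 1) (x 2) := by
  have hset : {y | ∃ j < 2, x j = y ∧ y < x 2} = if x 1 < x 2 then {0, x 1} else {0} := by
    ext y
    simp only [Nat.lt_succ_iff, Nat.le_one_iff_eq_zero_or_eq_one]
    split_ifs with h <;> simp only [mem_ofPred_eq, exists_eq_or_imp, exists_eq_left, hx0,
      mem_insert_iff, mem_singleton_iff] <;> grind
  rw [hset, spacing]
  split_ifs with h
  · rw [csSup_pair, max_eq_right hx1.le]
  · rw [csSup_singleton]

end PreviousMaximum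

theorem stmt10 {Ω : Type*} [MeasureSpace Ω] [IsProbabilityMeasure (ℙ : Measure Ω)]
    (X : ℕ → Ω → ℝ)
    (hX0 : ∀ ω, X 0 ω = 0)
    (hXmeas : ∀ i, Measurable (X i))
    (hXindep : iIndepFun (fun i : ℕ => X (i + 1)) ℙ)
    (hXunif : ∀ i : ℕ, Measure.map (X (i + 1)) ℙ
      = (volume : Measure ℝ).restrict (Set.Ioc 0 1))
    (Z : ℕ → Ω → ℝ)
    (hZ : ∀ k ω, Z k ω = X k ω - sSup {y : ℝ | ∃ j < k, X j ω = y ∧ y < X k ω})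
    (α : ℝ) (hα : 0 < α)
    (C : ℝ)
    (hC : C = ∫ ω, (Z 1 ω ^ α - ∫ ω', Z 1 ω' ^ α ∂ℙ)
        * (Z 2 ω ^ α - ∫ ω', Z 2 ω' ^ α ∂ℙ) ∂ℙ) :
    C = ((α - 2) * Real.Gamma (2 * α + 3) + 2 * (α + 2) * Real.Gamma (α + 2) ^ 2)
        / (2 * (α + 1) ^ 2 * (α + 2) * Real.Gamma (2 * α + 3)) ∧
      (C = 0 ↔ α = 1) ∧ (1 < α → 0 < C) ∧ (α < 1 → C < 0) := by
  have hpair : Measurable fun ω => (X 1 ω, X 2 ω) := (hXmeas 1).prodMk (hXmeas 2)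
  have hlaw : (ℙ : Measure Ω).map (fun ω => (X 1 ω, X 2 ω)) = unif01.prod unif01 := by
    rw [(indepFun_iff_map_prod_eq_prod_map_map (hXmeas 1).aemeasurable
      (hXmeas 2).aemeasurable).1 (hXindep.indepFun (i := 0) (j := 1) (by decide)),
      hXunif 0, hXunif 1]
  have hpos : ∀ᵐ ω ∂ℙ, 0 < X 1 ω ∧ 0 < X 2 ω := by
    filter_upwards [ae_of_ae_map hpair.aemeasurable (hlaw ▸ ae_unif_prod_mem)] with ω hω
    exact ⟨hω.1.1, hω.2.1⟩
  have hcov : C = cov[fun x => x ^ α, symmRpow (α + 1); unif01] / (α + 1) := by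
    rw [hC, ← covariance_rpow_spacing hα.le, ← hlaw, covariance_map_fun
      (continuous_fst.rpow_const fun _ => Or.inr hα.le).aestronglyMeasurable
      ((measurable_spacing.pow_const α).aestronglyMeasurable) hpair.aemeasurable]
    refine covariance_congr_ae ?_ ?_ <;> filter_upwards [hpos] with ω ⟨h1, h2⟩
    · rw [hZ, sub_sSup_prev_one (x := fun i => X i ω) (hX0 ω) h1]
    · rw [hZ, sub_sSup_prev_two (x := fun i => X i ω) (hX0 ω) h1 h2]
  have hsymm := covariance_rpow_symmRpow hα.le (β := α + 1) (by linarith)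
  have hC_pos : 1 < α → 0 < C := fun h => by
    rw [hcov, hsymm]
    have := covariance_symmRpow_pos h (by linarith : 1 < α + 1)
    positivity
  have hC_neg : α < 1 → C < 0 := fun h => by
    rw [hcov, hsymm]
    have := covariance_symmRpow_neg hα h (by linarith : 1 < α + 1)
    exact div_neg_of_neg_of_pos (by linarith) (by linarith)
  refine ⟨?_, ⟨fun h0 => ?_, fun h1 => ?_⟩, hC_pos, hC_neg⟩
  · have hΓ : Gamma (α + 2) = (α + 1) * Gamma (α + 1) := by
      rw [show α + 2 = α + 1 + 1 by ring, Gamma_add_one (by linarith)]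
    have := Gamma_pos_of_pos (by linarith : 0 < α + 1)
    have := Gamma_pos_of_pos (by linarith : 0 < 2 * α + 3)
    rw [hcov, covariance_rpow_symmRpow_eq hα.le, hΓ]
    field_simp
    ring
  · by_contra hne
    rcases lt_or_gt_of_ne hne with h | h
    · exact (hC_neg h).ne h0
    · exact (hC_pos h).ne' h0
  · subst h1
    rw [hcov, hsymm, symmRpow_one, covariance_const_left, zero_div, zero_div]
end

section
/- Let α > 1 and let D̃_α be the unique mean-zero square-integrable solution of the fixed-point equation D̃_α =_d U^α D̃_α^{(1)} + (1-U)^α D̃_α^{(2)} + (α/(α-1))U^α + (1/(α-1))(1-U)^α - 1/(α-1), with U uniform on (0,1) independent of the independent copies D̃_α^{(1)}, D̃_α^{(2)}. Then Var[D̃_α] = α(α - 2 + 2(2α+1)J(α)) / ((α-1)²(2α-1)), where J(α) = ∫_0^1 u^α(1-u)^α du. -/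
/-!
Since `D` is centred, its variance is `E[D²]`, and `D` has the law of `A₁ D₁ + A₂ D₂ + C` with
`A₁ = U^α`, `A₂ = (1-U)^α` and toll `C = c(U)`. The coefficients are independent of the
centred, independent copies `D₁, D₂`, so every cross term has mean zero and
`E[D²] = (E[U^{2α}] + E[(1-U)^{2α}]) E[D²] + E[c(U)²] = 2/(2α+1) E[D²] + ∫₀¹ c²`.
Expanding `∫₀¹ c²` leaves only Beta integrals, all elementary except `J(α)`; solving the linear
equation for `E[D²]` gives the formula.
-/

open MeasureTheory ProbabilityTheory Real Set

theorem integral_sq_mul_add_mul_add_of_indepFun {Ω : Type*} [MeasurableSpace Ω]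
    {μ : Measure Ω} [IsProbabilityMeasure μ] {A₁ A₂ C D₁ D₂ : Ω → ℝ}
    (hA₁ : MemLp A₁ 2 μ) (hA₂ : MemLp A₂ 2 μ) (hC : MemLp C 2 μ)
    (hD₁ : MemLp D₁ 2 μ) (hD₂ : MemLp D₂ 2 μ)
    (hAD : IndepFun (fun ω ↦ (A₁ ω, A₂ ω, C ω)) (fun ω ↦ (D₁ ω, D₂ ω)) μ)
    (hD : IndepFun D₁ D₂ μ) (hD₁0 : ∫ ω, D₁ ω ∂μ = 0) (hD₂0 : ∫ ω, D₂ ω ∂μ = 0) :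
    ∫ ω, (A₁ ω * D₁ ω + A₂ ω * D₂ ω + C ω) ^ 2 ∂μ
      = (∫ ω, A₁ ω ^ 2 ∂μ) * (∫ ω, D₁ ω ^ 2 ∂μ) + (∫ ω, A₂ ω ^ 2 ∂μ) * (∫ ω, D₂ ω ^ 2 ∂μ)
        + ∫ ω, C ω ^ 2 ∂μ := by
  have indep {f : ℝ × ℝ × ℝ → ℝ} {g : ℝ × ℝ → ℝ} (hf : Measurable f) (hg : Measurable g) :
      IndepFun (fun ω ↦ f (A₁ ω, A₂ ω, C ω)) (fun ω ↦ g (D₁ ω, D₂ ω)) μ :=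
    hAD.comp hf hg
  have h₁ : IndepFun (fun ω ↦ A₁ ω ^ 2) (fun ω ↦ D₁ ω ^ 2) μ :=
    indep (f := fun x ↦ x.1 ^ 2) (g := fun y ↦ y.1 ^ 2) (by fun_prop) (by fun_prop)
  have h₂ : IndepFun (fun ω ↦ A₂ ω ^ 2) (fun ω ↦ D₂ ω ^ 2) μ :=
    indep (f := fun x ↦ x.2.1 ^ 2) (g := fun y ↦ y.2 ^ 2) (by fun_prop) (by fun_prop)
  have h₁₂ : IndepFun (fun ω ↦ A₁ ω * A₂ ω) (fun ω ↦ D₁ ω * D₂ ω) μ :=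
    indep (f := fun x ↦ x.1 * x.2.1) (g := fun y ↦ y.1 * y.2) (by fun_prop) (by fun_prop)
  have h₁C : IndepFun (fun ω ↦ A₁ ω * C ω) D₁ μ :=
    indep (f := fun x ↦ x.1 * x.2.2) (g := Prod.fst) (by fun_prop) (by fun_prop)
  have h₂C : IndepFun (fun ω ↦ A₂ ω * C ω) D₂ μ :=
    indep (f := fun x ↦ x.2.1 * x.2.2) (g := Prod.snd) (by fun_prop) (by fun_prop)
  have hD₁D₂ : Integrable (fun ω ↦ D₁ ω * D₂ ω) μ :=
    hD.integrable_mul (hD₁.integrable one_le_two) (hD₂.integrable one_le_two)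
  have i₁ : Integrable (fun ω ↦ A₁ ω ^ 2 * D₁ ω ^ 2) μ :=
    h₁.integrable_mul hA₁.integrable_sq hD₁.integrable_sq
  have i₂ : Integrable (fun ω ↦ A₂ ω ^ 2 * D₂ ω ^ 2) μ :=
    h₂.integrable_mul hA₂.integrable_sq hD₂.integrable_sq
  have i₁₂ : Integrable (fun ω ↦ A₁ ω * A₂ ω * (D₁ ω * D₂ ω)) μ :=
    h₁₂.integrable_mul (hA₁.integrable_mul hA₂) hD₁D₂
  have i₁C : Integrable (fun ω ↦ A₁ ω * C ω * D₁ ω) μ :=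
    h₁C.integrable_mul (hA₁.integrable_mul hC) (hD₁.integrable one_le_two)
  have i₂C : Integrable (fun ω ↦ A₂ ω * C ω * D₂ ω) μ :=
    h₂C.integrable_mul (hA₂.integrable_mul hC) (hD₂.integrable one_le_two)
  have iC : Integrable (fun ω ↦ C ω ^ 2) μ := hC.integrable_sq
  have expand : ∀ ω, (A₁ ω * D₁ ω + A₂ ω * D₂ ω + C ω) ^ 2
      = A₁ ω ^ 2 * D₁ ω ^ 2 + A₂ ω ^ 2 * D₂ ω ^ 2 + C ω ^ 2
        + 2 * (A₁ ω * A₂ ω * (D₁ ω * D₂ ω) + A₁ ω * C ω * D₁ ω + A₂ ω * C ω * D₂ ω) := by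
    intro ω; ring
  simp_rw [expand]
  rw [integral_add (by fun_prop) (by fun_prop), integral_add (by fun_prop) iC,
    integral_add i₁ i₂, integral_const_mul, integral_add (by fun_prop) i₂C, integral_add i₁₂ i₁C,
    h₁.integral_fun_mul_eq_mul_integral hA₁.integrable_sq.1 hD₁.integrable_sq.1,
    h₂.integral_fun_mul_eq_mul_integral hA₂.integrable_sq.1 hD₂.integrable_sq.1,
    h₁₂.integral_fun_mul_eq_mul_integral (hA₁.integrable_mul hA₂).1 hD₁D₂.1,
    hD.integral_fun_mul_eq_mul_integral hD₁.1 hD₂.1,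
    h₁C.integral_fun_mul_eq_mul_integral (hA₁.integrable_mul hC).1 hD₁.1,
    h₂C.integral_fun_mul_eq_mul_integral (hA₂.integrable_mul hC).1 hD₂.1, hD₁0, hD₂0]
  ring

namespace ProbabilityTheory.HasLaw

variable {Ω : Type*} [MeasurableSpace Ω] {μ : Measure Ω} {U : Ω → ℝ}

theorem memLp_comp_of_uniform [IsFiniteMeasure μ]
    (hU : HasLaw U (volume.restrict (Ioo 0 1)) μ) {f : ℝ → ℝ} (hf : Continuous f)
    (p : ENNReal) : MemLp (fun ω ↦ f (U ω)) p μ := by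
  obtain ⟨M, hM⟩ := isCompact_Icc.exists_bound_of_continuousOn (hf.continuousOn (s := Icc 0 1))
  have hUmem : ∀ᵐ ω ∂μ, U ω ∈ Icc (0 : ℝ) 1 :=
    ae_of_ae_map hU.aemeasurable <| hU.map_eq ▸
      (ae_restrict_mem measurableSet_Ioo).mono fun _ hu ↦ Ioo_subset_Icc_self hu
  exact MemLp.of_bound (hf.comp_aestronglyMeasurable hU.aemeasurable.aestronglyMeasurable) M
    (hUmem.mono fun ω hω ↦ hM _ hω)

theorem integral_comp_of_uniform (hU : HasLaw U (volume.restrict (Ioo 0 1)) μ)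
    {f : ℝ → ℝ} (hf : AEStronglyMeasurable f (volume.restrict (Ioo 0 1))) :
    ∫ ω, f (U ω) ∂μ = ∫ u in (0 : ℝ)..1, f u := by
  rw [intervalIntegral.integral_of_le zero_le_one, integral_Ioc_eq_integral_Ioo]
  exact hU.integral_comp hf

end ProbabilityTheory.HasLaw

theorem integral_rpow_zero_one {r : ℝ} (hr : -1 < r) : ∫ u in (0 : ℝ)..1, u ^ r = 1 / (r + 1) := by
  rw [integral_rpow (Or.inl hr), one_rpow, zero_rpow (by linarith)]
  ring

theorem integral_rpow_sq_zero_one {α : ℝ} (hα : -1 < 2 * α) :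
    ∫ u in (0 : ℝ)..1, (u ^ α) ^ 2 = 1 / (2 * α + 1) := by
  have hsq : EqOn (fun u : ℝ ↦ (u ^ α) ^ 2) (fun u ↦ u ^ (2 * α)) (uIcc 0 1) := by
    intro u hu
    rw [uIcc_of_le zero_le_one] at hu
    simp only [← rpow_natCast, ← rpow_mul hu.1, Nat.cast_ofNat, mul_comm]
  rw [intervalIntegral.integral_congr hsq, integral_rpow_zero_one hα]

theorem integral_sq_mul_rpow_add_mul_one_sub_rpow_sub {α : ℝ} (hα : 0 ≤ α) (a b : ℝ) :
    ∫ u in (0 : ℝ)..1, (a * u ^ α + b * (1 - u) ^ α - b) ^ 2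
      = (a ^ 2 + b ^ 2) / (2 * α + 1) + 2 * a * b * (∫ u in (0 : ℝ)..1, u ^ α * (1 - u) ^ α)
        - 2 * b * (a + b) / (α + 1) + b ^ 2 := by
  have hf : Continuous fun u : ℝ ↦ u ^ α := continuous_rpow_const hα
  have expand : (fun u : ℝ ↦ (a * u ^ α + b * (1 - u) ^ α - b) ^ 2) = fun u ↦
      a ^ 2 * (u ^ α) ^ 2 + b ^ 2 * ((1 - u) ^ α) ^ 2 + 2 * a * b * (u ^ α * (1 - u) ^ α)
        - 2 * a * b * u ^ α - 2 * b ^ 2 * (1 - u) ^ α + b ^ 2 := by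
    funext u; ring
  rw [expand]
  simp (disch := exact Continuous.intervalIntegrable (by fun_prop) _ _) only
    [intervalIntegral.integral_add, intervalIntegral.integral_sub,
      intervalIntegral.integral_const_mul]
  simp only [intervalIntegral.integral_comp_sub_left (fun u ↦ (u ^ α) ^ 2),
    intervalIntegral.integral_comp_sub_left (fun u ↦ u ^ α), sub_self, sub_zero,
    integral_rpow_sq_zero_one (by linarith : -1 < 2 * α),
    integral_rpow_zero_one (by linarith : -1 < α),
    intervalIntegral.integral_const, smul_eq_mul, one_mul]
  ring

theorem integral_sq_eq_of_uniform_split_fixedPoint {Ω : Type*} [MeasurableSpace Ω]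
    {μ : Measure Ω} [IsProbabilityMeasure μ] {α : ℝ} (hα : 0 ≤ α) {c : ℝ → ℝ} (hc : Continuous c)
    {U D D₁ D₂ : Ω → ℝ} (hU : HasLaw U (volume.restrict (Ioo 0 1)) μ)
    (hD₁ : IdentDistrib D₁ D μ μ) (hD₂ : IdentDistrib D₂ D μ μ)
    (hUD : IndepFun U (fun ω ↦ (D₁ ω, D₂ ω)) μ) (hD : IndepFun D₁ D₂ μ)
    (hL2 : MemLp D 2 μ) (hmean : ∫ ω, D ω ∂μ = 0)
    (hfix : IdentDistrib D (fun ω ↦ U ω ^ α * D₁ ω + (1 - U ω) ^ α * D₂ ω + c (U ω)) μ μ) :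
    ∫ ω, D ω ^ 2 ∂μ = 2 / (2 * α + 1) * ∫ ω, D ω ^ 2 ∂μ + ∫ u in (0 : ℝ)..1, c u ^ 2 := by
  have hf : Continuous fun u : ℝ ↦ u ^ α := continuous_rpow_const hα
  have hg : Continuous fun u : ℝ ↦ (1 - u) ^ α := hf.comp (by fun_prop)
  have hsecond := integral_sq_mul_add_mul_add_of_indepFun (hU.memLp_comp_of_uniform hf 2)
    (hU.memLp_comp_of_uniform hg 2) (hU.memLp_comp_of_uniform hc 2)
    (hD₁.memLp_iff.2 hL2) (hD₂.memLp_iff.2 hL2)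
    (hUD.comp (by fun_prop : Measurable fun u ↦ (u ^ α, (1 - u) ^ α, c u)) measurable_id)
    hD (hD₁.integral_eq.trans hmean) (hD₂.integral_eq.trans hmean)
  rw [← hfix.sq.integral_eq, hD₁.sq.integral_eq, hD₂.sq.integral_eq,
    hU.integral_comp_of_uniform (f := fun u ↦ (u ^ α) ^ 2) (by fun_prop),
    hU.integral_comp_of_uniform (f := fun u ↦ ((1 - u) ^ α) ^ 2) (by fun_prop),
    hU.integral_comp_of_uniform (f := fun u ↦ c u ^ 2) (by fun_prop),
    intervalIntegral.integral_comp_sub_left (fun u ↦ (u ^ α) ^ 2), sub_self, sub_zero,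
    integral_rpow_sq_zero_one (by linarith)] at hsecond
  linear_combination hsecond

theorem stmt14 {Ω : Type*} [MeasureSpace Ω] [IsProbabilityMeasure (ℙ : Measure Ω)]
    (α : ℝ) (hα : 1 < α)
    (U D D1 D2 : Ω → ℝ)
    (hUmeas : Measurable U) (hDmeas : Measurable D)
    (hD1meas : Measurable D1) (hD2meas : Measurable D2)
    (hU : Measure.map U ℙ = (volume : Measure ℝ).restrict (Set.Ioo 0 1))
    (hcopy1 : Measure.map D1 ℙ = Measure.map D ℙ)
    (hcopy2 : Measure.map D2 ℙ = Measure.map D ℙ)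
    (hindep : iIndepFun ![U, D1, D2] ℙ)
    (hL2 : MemLp D 2 ℙ)
    (hmean : (∫ ω, D ω ∂ℙ) = 0)
    (hfix : Measure.map D ℙ = Measure.map (fun ω =>
        U ω ^ α * D1 ω + (1 - U ω) ^ α * D2 ω
          + (α / (α - 1)) * U ω ^ α + (1 / (α - 1)) * (1 - U ω) ^ α
          - 1 / (α - 1)) ℙ) :
    variance D ℙ
      = α * (α - 2 + 2 * (2 * α + 1) * ∫ u in (0 : ℝ)..1, u ^ α * (1 - u) ^ α)
        / ((α - 1) ^ 2 * (2 * α - 1)) := by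
  have hUD : IndepFun U (fun ω ↦ (D1 ω, D2 ω)) ℙ := by
    have hmeas : ∀ i, Measurable (![U, D1, D2] i) := fun i ↦ by fin_cases i <;> assumption
    simpa using (hindep.indepFun_prodMk hmeas 1 2 0 (by decide) (by decide)).symm
  have hD12 : IndepFun D1 D2 ℙ := by simpa using hindep.indepFun (show (1 : Fin 3) ≠ 2 by decide)
  have hsecond := integral_sq_eq_of_uniform_split_fixedPoint (α := α) (by linarith)
    (c := fun u ↦ α / (α - 1) * u ^ α + 1 / (α - 1) * (1 - u) ^ α - 1 / (α - 1))
    (by fun_prop (disch := linarith)) ⟨hUmeas.aemeasurable, hU⟩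
    ⟨hD1meas.aemeasurable, hDmeas.aemeasurable, hcopy1⟩
    ⟨hD2meas.aemeasurable, hDmeas.aemeasurable, hcopy2⟩ hUD hD12 hL2 hmean
    ⟨hDmeas.aemeasurable, by fun_prop, by convert hfix using 2; funext ω; ring⟩
  rw [integral_sq_mul_rpow_add_mul_one_sub_rpow_sub (by linarith)] at hsecond
  rw [variance_of_integral_eq_zero hDmeas.aemeasurable hmean]
  generalize ∫ ω, D ω ^ 2 = m at hsecond ⊢
  generalize ∫ u in (0 : ℝ)..1, u ^ α * (1 - u) ^ α = J at hsecond ⊢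
  have hα₁ : α - 1 ≠ 0 := by linarith
  have hα₂ : 2 * α - 1 ≠ 0 := by linarith
  field_simp at hsecond ⊢
  linear_combination hsecond
end
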